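/- arXiv:1403.6227 — 2 statements merged into one kernel-verified Lean document; each statement's English description precedes it below -/
import Mathlib

section
/- Let u ≥ 1 and m ≥ 2, and let G = (ℤ/uℤ)^m ⋊ W_m, where the hyperoctahedral group W_m acts on (ℤ/uℤ)^m by permuting the factors through its natural quotient map onto S_m (so sign changes act trivially). Then the abelianization G/[G,G] is isomorphic to ℤ/uℤ × ℤ/2ℤ × ℤ/2ℤ, and it is generated by the image of a generator of the first coordinate factor of (ℤ/uℤ)^m, the image of the transposition s_1 (interchanging 1 and 2), and the image of the sign change t (t(1) = −1, t(i) = i for i ≥ 2). -/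
/-- Points of the hyperoctahedral group: the point `(a, s) : Fin n × Bool` encodes the signed
point `±(a+1)` of `{-n, …, -1, 1, …, n}`, with `s = false` for `+` and `s = true` for `-`.
`negPt` is the negation `i ↦ -i`. -/
def negPt (n : ℕ) : Equiv.Perm (Fin n × Bool) where
  toFun p := (p.1, !p.2)
  invFun p := (p.1, !p.2)
  left_inv p := by simp
  right_inv p := by simp

/-- The hyperoctahedral group `W_n` of signed permutations of `n`: permutations `w` of
`{±1, …, ±n}` with `w(-i) = -w(i)`, i.e. permutations commuting with the negation. -/
def HypOct (n : ℕ) : Subgroup (Equiv.Perm (Fin n × Bool)) :=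
  Subgroup.centralizer {negPt n}

noncomputable instance (n : ℕ) : Fintype ↥(HypOct n) := Fintype.ofFinite _

/-- `w` is the negative `m`-cycle on the (0-indexed) block `[u, u+m)`:
`w(v) = v+1` for `v = u, …, u+m-2`, `w(u+m-1) = -u`, and `w` fixes all points not in
`±[u, u+m)`. -/
def IsNegCycleOn (n : ℕ) (w : Equiv.Perm (Fin n × Bool)) (u m : ℕ) : Prop :=
  ∀ p : Fin n × Bool,
    (((w p).1 : ℕ)) =
      (if (p.1 : ℕ) + 1 = u + m then u
       else if u ≤ (p.1 : ℕ) ∧ (p.1 : ℕ) + 1 < u + m then (p.1 : ℕ) + 1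
       else (p.1 : ℕ)) ∧
    (w p).2 = (if (p.1 : ℕ) + 1 = u + m then !p.2 else p.2)

/-- `w` is the positive `m`-cycle on the (0-indexed) block `[u, u+m)`:
`w(v) = v+1` for `v = u, …, u+m-2`, `w(u+m-1) = u`, fixing all other points, with no sign
changes. -/
def IsPosCycleOn (n : ℕ) (w : Equiv.Perm (Fin n × Bool)) (u m : ℕ) : Prop :=
  ∀ p : Fin n × Bool,
    (((w p).1 : ℕ)) =
      (if (p.1 : ℕ) + 1 = u + m then u
       else if u ≤ (p.1 : ℕ) ∧ (p.1 : ℕ) + 1 < u + m then (p.1 : ℕ) + 1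
       else (p.1 : ℕ)) ∧
    (w p).2 = p.2

/-- `w` interchanges the two consecutive blocks `[u, u+m)` and `[u+m, u+2m)` by translation,
with no sign changes, fixing all other points. -/
def IsBlockSwapOn (n : ℕ) (w : Equiv.Perm (Fin n × Bool)) (u m : ℕ) : Prop :=
  ∀ p : Fin n × Bool,
    (((w p).1 : ℕ)) =
      (if u ≤ (p.1 : ℕ) ∧ (p.1 : ℕ) < u + m then (p.1 : ℕ) + m
       else if u + m ≤ (p.1 : ℕ) ∧ (p.1 : ℕ) < u + 2 * m then (p.1 : ℕ) - m
       else (p.1 : ℕ)) ∧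
    (w p).2 = p.2

/-- `w` sends `v` to `-v` for `v` in the block `[u, u+m)` and fixes all other points. -/
def IsSignFlipOn (n : ℕ) (w : Equiv.Perm (Fin n × Bool)) (u m : ℕ) : Prop :=
  ∀ p : Fin n × Bool,
    (w p).1 = p.1 ∧
    (w p).2 = (if u ≤ (p.1 : ℕ) ∧ (p.1 : ℕ) < u + m then !p.2 else p.2)

/-- A signed partition of `n`: a pair `(μ⁻, μ⁺)` of partitions with `|μ⁻| + |μ⁺| = n`, where
`μ⁻ = (μ⁻_1 ≤ … ≤ μ⁻_a)` is listed increasingly and `μ⁺ = (μ⁺_1 ≥ … ≥ μ⁺_b)` decreasingly. -/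
structure SignedPartition (n : ℕ) where
  neg : List ℕ
  pos : List ℕ
  neg_sorted : neg.Pairwise (· ≤ ·)
  pos_sorted : pos.Pairwise (· ≥ ·)
  neg_pos : ∀ p ∈ neg, 0 < p
  pos_pos : ∀ p ∈ pos, 0 < p
  sum_eq : neg.sum + pos.sum = n

/-- The signed permutation `w` changes an even number of signs, i.e. `w` lies in the
Coxeter group `W'_n` of type `D_n`. -/
def evenSign (n : ℕ) (w : Equiv.Perm (Fin n × Bool)) : Prop :=
  Even (Finset.univ.filter (fun a : Fin n => (w (a, false)).2 = true)).card

/-- The action of the symmetric group `S_m = Equiv.Perm (Fin m)` on the direct product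
`(ℤ/uℤ)^m` (written multiplicatively) by permuting the factors, as a homomorphism into the
automorphism group; this is the action defining the wreath product `ℤ/uℤ ≀ S_m`. -/
def permWreathAct (m u : ℕ) :
    Equiv.Perm (Fin m) →* MulAut (Fin m → Multiplicative (ZMod u)) where
  toFun σ := MulEquiv.arrowCongr σ (MulEquiv.refl (Multiplicative (ZMod u)))
  map_one' := by
    ext f i
    rfl
  map_mul' σ τ := by
    ext f i
    rfl

open Equiv Multiplicative

namespace SP12

variable {m : ℕ}

lemma hyp_neg {w : Equiv.Perm (Fin m × Bool)} (hw : w ∈ HypOct m) (a : Fin m) (b : Bool) :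
    w (a, !b) = ((w (a, b)).1, !(w (a, b)).2) := by
  have h := Subgroup.mem_centralizer_iff.mp hw (negPt m) rfl
  have h2 := congrArg (fun e => e (a, b)) h
  simpa [Equiv.Perm.mul_apply, negPt, Equiv.coe_fn_mk] using h2.symm

def Lperm (σ : Perm (Fin m)) : Perm (Fin m × Bool) := σ.prodCongr (Equiv.refl Bool)

@[simp] lemma Lperm_apply (σ : Perm (Fin m)) (p : Fin m × Bool) :
    Lperm σ p = (σ p.1, p.2) := rfl

lemma Lperm_mem (σ : Perm (Fin m)) : Lperm σ ∈ HypOct m := by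
  rw [HypOct, Subgroup.mem_centralizer_iff]
  rintro g hg
  rw [Set.mem_singleton_iff] at hg
  subst hg
  ext p : 1 <;> rfl

def Lhom : Perm (Fin m) →* ↥(HypOct m) where
  toFun σ := ⟨Lperm σ, Lperm_mem σ⟩
  map_one' := by ext p : 3 <;> rfl
  map_mul' σ τ := by ext p : 3 <;> rfl

def flipPerm (ε : Fin m → Bool) : Perm (Fin m × Bool) where
  toFun p := (p.1, xor (ε p.1) p.2)
  invFun p := (p.1, xor (ε p.1) p.2)
  left_inv p := by cases p with | mk a b => cases ε a <;> cases b <;> simp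
  right_inv p := by cases p with | mk a b => cases ε a <;> cases b <;> simp

@[simp] lemma flipPerm_apply (ε : Fin m → Bool) (p : Fin m × Bool) :
    flipPerm ε p = (p.1, xor (ε p.1) p.2) := rfl

lemma flipPerm_mem (ε : Fin m → Bool) : flipPerm ε ∈ HypOct m := by
  rw [HypOct, Subgroup.mem_centralizer_iff]
  rintro g hg
  rw [Set.mem_singleton_iff] at hg
  subst hg
  ext p : 1
  cases p with | mk a b => cases h : ε a <;> cases b <;>
    simp [Equiv.Perm.mul_apply, negPt, h]

def fliph (ε : Fin m → Bool) : ↥(HypOct m) := ⟨flipPerm ε, flipPerm_mem ε⟩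

lemma fliph_mul (ε ε' : Fin m → Bool) :
    fliph ε * fliph ε' = fliph (fun a => xor (ε a) (ε' a)) := by
  apply Subtype.ext
  ext p : 1
  cases p with | mk a b => cases h : ε a <;> cases h' : ε' a <;> cases b <;>
    simp [fliph, Equiv.Perm.mul_apply, h, h', Subgroup.coe_mul]

lemma fliph_sq (ε : Fin m → Bool) : fliph ε * fliph ε = 1 := by
  rw [fliph_mul]
  apply Subtype.ext
  ext p : 1
  cases p with | mk a b => cases h : ε a <;> simp [fliph, h]

lemma conj_Lhom_fliph (σ : Perm (Fin m)) (ε : Fin m → Bool) :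
    Lhom σ * fliph ε * (Lhom σ)⁻¹ = fliph (fun a => ε (σ⁻¹ a)) := by
  rw [← map_inv]
  apply Subtype.ext
  ext p : 1
  cases p with | mk a b =>
    show (Lperm σ) ((flipPerm ε) ((Lperm σ⁻¹) (a, b))) = _
    simp [fliph]

lemma decomp (w : ↥(HypOct m)) (σ : Perm (Fin m))
    (hσ : ∀ i : Fin m, σ i = ((w : Equiv.Perm (Fin m × Bool)) (i, false)).1) :
    w = fliph (fun a => ((w : Equiv.Perm (Fin m × Bool)) (σ⁻¹ a, false)).2) * Lhom σ := by
  apply Subtype.ext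
  ext p : 1
  cases p with | mk a b =>
    rw [Subgroup.coe_mul, Equiv.Perm.mul_apply]
    show _ = (flipPerm (fun a => ((w : Equiv.Perm (Fin m × Bool)) (σ⁻¹ a, false)).2)) ((Lperm σ) (a, b))
    cases b
    · simp only [Lperm_apply, flipPerm_apply, Bool.xor_false]
      rw [Equiv.Perm.coe_inv, Equiv.symm_apply_apply]
      exact Prod.ext (hσ a).symm rfl
    · have hb : (true : Bool) = !false := rfl
      rw [hb, hyp_neg w.2 a false]
      simp only [Lperm_apply, flipPerm_apply]
      rw [Equiv.Perm.coe_inv, Equiv.symm_apply_apply]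
      refine Prod.ext (hσ a).symm ?_
      cases ((w : Equiv.Perm (Fin m × Bool)) (a, false)).2 <;> rfl

def u2 : ℤˣ →* Multiplicative (ZMod 2) where
  toFun x := if x = 1 then 1 else Multiplicative.ofAdd 1
  map_one' := by simp
  map_mul' a b := by
    rcases Int.units_eq_one_or a with ha | ha <;> rcases Int.units_eq_one_or b with hb | hb <;>
      subst ha <;> subst hb <;> decide

def bsign (b : Bool) : ZMod 2 := cond b 1 0

lemma bsign_not (b : Bool) : bsign (!b) = 1 + bsign b := by cases b <;> decide

def coordSum (m u : ℕ) : (Fin m → Multiplicative (ZMod u)) →* Multiplicative (ZMod u) where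
  toFun f := ∏ i, f i
  map_one' := by simp
  map_mul' f g := by simp [Finset.prod_mul_distrib]

lemma hyp_fst_inj (v : ↥(HypOct m)) :
    Function.Injective (fun a : Fin m => ((v : Equiv.Perm (Fin m × Bool)) (a, false)).1) := by
  intro a a' h
  set vp := (v : Equiv.Perm (Fin m × Bool))
  have h1 : vp (a, false) = vp (a', false) ∨ vp (a, false) = vp (a', true) := by
    have ht : vp (a', true) = ((vp (a', false)).1, !(vp (a', false)).2) := hyp_neg v.2 a' false
    cases hb : (vp (a, false)).2 <;> cases hb' : (vp (a', false)).2
    · exact Or.inl (Prod.ext h (hb.trans hb'.symm))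
    · refine Or.inr ?_
      rw [ht]
      exact Prod.ext h (by rw [hb, hb']; rfl)
    · refine Or.inr ?_
      rw [ht]
      exact Prod.ext h (by rw [hb, hb']; rfl)
    · exact Or.inl (Prod.ext h (hb.trans hb'.symm))
  rcases h1 with h1 | h1
  · exact congrArg Prod.fst (vp.injective h1)
  · exact absurd (congrArg Prod.snd (vp.injective h1)) (by simp)

def flipChar : ↥(HypOct m) →* Multiplicative (ZMod 2) where
  toFun w := Multiplicative.ofAdd (∑ a : Fin m, bsign (((w : Equiv.Perm (Fin m × Bool)) (a, false)).2))
  map_one' := by simp [bsign]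
  map_mul' w v := by
    rw [← ofAdd_add]
    congr 1
    have key : ∀ a : Fin m,
        bsign ((((w * v : ↥(HypOct m)) : Equiv.Perm (Fin m × Bool)) (a, false)).2) =
          bsign (((v : Equiv.Perm (Fin m × Bool)) (a, false)).2) +
          bsign (((w : Equiv.Perm (Fin m × Bool))
            (((v : Equiv.Perm (Fin m × Bool)) (a, false)).1, false)).2) := by
      intro a
      rw [Subgroup.coe_mul, Equiv.Perm.mul_apply]
      rcases hv : (v : Equiv.Perm (Fin m × Bool)) (a, false) with ⟨c, sc⟩
      cases sc
      · simp [bsign]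
      · have : (w : Equiv.Perm (Fin m × Bool)) (c, true) =
            (((w : Equiv.Perm (Fin m × Bool)) (c, false)).1,
              !((w : Equiv.Perm (Fin m × Bool)) (c, false)).2) := hyp_neg w.2 c false
        rw [this, bsign_not]
        show (1 : ZMod 2) + _ = bsign true + _
        rfl
    simp only [key, Finset.sum_add_distrib]
    have hb := Fintype.sum_bijective
      (fun a : Fin m => ((v : Equiv.Perm (Fin m × Bool)) (a, false)).1)
      (Finite.injective_iff_bijective.mp (hyp_fst_inj v))
      (fun a : Fin m => bsign (((w : Equiv.Perm (Fin m × Bool))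
        (((v : Equiv.Perm (Fin m × Bool)) (a, false)).1, false)).2))
      (fun c : Fin m => bsign (((w : Equiv.Perm (Fin m × Bool)) (c, false)).2))
      (fun a => rfl)
    rw [hb, add_comm]

def zmod2Hom {G : Type*} [CommGroup G] (g : G) (hg : g * g = 1) :
    Multiplicative (ZMod 2) →* G :=
  AddMonoidHom.toMultiplicativeLeft
    (ZMod.lift 2 ⟨zmultiplesHom (Additive G) (Additive.ofMul g), by
      show ((2 : ℤ) • Additive.ofMul g) = 0
      rw [two_zsmul, ← ofMul_mul, hg]
      rfl⟩)

lemma zmod2Hom_apply_one {G : Type*} [CommGroup G] (g : G) (hg : g * g = 1) :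
    zmod2Hom g hg (Multiplicative.ofAdd (1 : ZMod 2)) = g := by
  simp only [zmod2Hom, AddMonoidHom.coe_toMultiplicativeLeft, Function.comp_apply, toAdd_ofAdd]
  have : ((1 : ZMod 2)) = ((1 : ℤ) : ZMod 2) := by decide
  rw [this, ZMod.lift_coe]
  show Additive.toMul ((1 : ℤ) • Additive.ofMul g) = g
  simp

lemma multZModHom_ext {n : ℕ} [NeZero n] {M : Type*} [Monoid M]
    {f g : Multiplicative (ZMod n) →* M}
    (h : f (Multiplicative.ofAdd (1 : ZMod n)) = g (Multiplicative.ofAdd (1 : ZMod n))) :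
    f = g := by
  refine MonoidHom.ext fun x => ?_
  have hx : x = (Multiplicative.ofAdd (1 : ZMod n)) ^ (ZMod.val (Multiplicative.toAdd x)) := by
    rw [← ofAdd_nsmul]
    rw [nsmul_eq_mul, mul_one]
    rw [ZMod.natCast_val, ZMod.cast_id]
    rfl
  rw [hx, map_pow, map_pow, h]

lemma ab_conj {G : Type*} [Group G] (g h : G) :
    Abelianization.of (g * h * g⁻¹) = Abelianization.of h := by
  rw [map_mul, map_mul, map_inv, mul_inv_cancel_comm]

lemma ab_conj_hom {G H : Type*} [Group G] [Group H] (f : G →* H) (g h : G) :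
    Abelianization.of (f (g * h * g⁻¹)) = Abelianization.of (f h) := by
  rw [map_mul f, map_mul f, map_inv f, ab_conj]

lemma flipChar_apply (w : ↥(HypOct m)) :
    flipChar w = Multiplicative.ofAdd
      (∑ a : Fin m, bsign (((w : Equiv.Perm (Fin m × Bool)) (a, false)).2)) := rfl

lemma s1_eq (hm : 2 ≤ m) (s₁ : ↥(HypOct m))
    (hs₁ : IsBlockSwapOn m (s₁ : Equiv.Perm (Fin m × Bool)) 0 1) :
    s₁ = Lhom (Equiv.swap (⟨0, by omega⟩ : Fin m) ⟨1, by omega⟩) := by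
  apply Subtype.ext
  ext p : 1
  cases p with | mk a b =>
  have h := hs₁ (a, b)
  show _ = Lperm _ (a, b)
  rw [Lperm_apply]
  refine Prod.ext (Fin.ext ?_) h.2
  have hr : ((Equiv.swap (⟨0, by omega⟩ : Fin m) ⟨1, by omega⟩ a : Fin m) : ℕ) =
      if (a : ℕ) = 0 then 1 else if (a : ℕ) = 1 then 0 else (a : ℕ) := by
    by_cases h0 : (a : ℕ) = 0
    · have ha : a = (⟨0, by omega⟩ : Fin m) := Fin.ext h0
      rw [ha, Equiv.swap_apply_left]
      simp
    · by_cases h1 : (a : ℕ) = 1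
      · have ha : a = (⟨1, by omega⟩ : Fin m) := Fin.ext h1
        rw [ha, Equiv.swap_apply_right]
        simp
      · rw [Equiv.swap_apply_of_ne_of_ne (fun hc => h0 (congrArg Fin.val hc))
          (fun hc => h1 (congrArg Fin.val hc))]
        simp [h0, h1]
  dsimp only at h
  rw [h.1, hr]
  have := a.isLt
  split_ifs <;> omega

lemma t_eq (t : ↥(HypOct m))
    (ht : IsSignFlipOn m (t : Equiv.Perm (Fin m × Bool)) 0 1) :
    t = fliph (fun a => decide ((a : ℕ) = 0)) := by
  apply Subtype.ext
  ext p : 1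
  cases p with | mk a b =>
  have h := ht (a, b)
  show _ = flipPerm (fun a => decide ((a : ℕ) = 0)) (a, b)
  rw [flipPerm_apply]
  refine Prod.ext h.1 ?_
  rw [h.2]
  by_cases h0 : (a : ℕ) = 0 <;> simp [h0] <;> omega

section Main

variable {u : ℕ} (π : ↥(HypOct m) →* Equiv.Perm (Fin m))

lemma act_apply (g : ↥(HypOct m)) (f : Fin m → Multiplicative (ZMod u)) :
    ((permWreathAct m u).comp π) g f = fun i => f ((π g)⁻¹ i) := rfl

def φfull (u : ℕ) :
    ((Fin m → Multiplicative (ZMod u)) ⋊[(permWreathAct m u).comp π] ↥(HypOct m)) →*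
      (Multiplicative (ZMod u) × Multiplicative (ZMod 2) × Multiplicative (ZMod 2)) :=
  SemidirectProduct.lift ((MonoidHom.inl _ _).comp (coordSum m u))
    ((MonoidHom.inr _ _).comp ((u2.comp (Equiv.Perm.sign.comp π)).prod flipChar))
    (by
      intro g
      apply MonoidHom.ext
      intro f
      simp only [MonoidHom.comp_apply, MulEquiv.coe_toMonoidHom, MulAut.conj_apply,
        mul_inv_cancel_comm]
      congr 1
      show coordSum m u (fun i => f ((π g)⁻¹ i)) = coordSum m u f
      show ∏ i, f ((π g)⁻¹ i) = ∏ i, f i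
      exact Equiv.prod_comp (π g)⁻¹ f)

lemma φfull_inl (f : Fin m → Multiplicative (ZMod u)) :
    φfull π u (SemidirectProduct.inl f) = (coordSum m u f, 1, 1) := by
  rw [φfull, SemidirectProduct.lift_inl]
  rfl

lemma φfull_inr (w : ↥(HypOct m)) :
    φfull π u (SemidirectProduct.inr w) =
      (1, u2 (Equiv.Perm.sign (π w)), flipChar w) := by
  rw [φfull, SemidirectProduct.lift_inr]
  rfl

end Main

end SP12

open SP12

/-- For `u ≥ 1`, `m ≥ 2` and `G = (ℤ/uℤ)^m ⋊ W_m`, where the hyperoctahedral group `W_m`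
permutes the coordinates through its natural quotient map `π : W_m → S_m` (sign changes
acting trivially), the abelianization `G/[G,G]` is isomorphic to `ℤ/uℤ × ℤ/2ℤ × ℤ/2ℤ`, and
it is generated by the images of a generator of the first coordinate factor, of the
transposition `s₁`, and of the sign change `t`. -/
theorem stmt_12 (u m : ℕ) (hu : 1 ≤ u) (hm : 2 ≤ m)
    (π : ↥(HypOct m) →* Equiv.Perm (Fin m))
    (hπ : ∀ (g : ↥(HypOct m)) (i : Fin m),
      π g i = ((g : Equiv.Perm (Fin m × Bool)) (i, false)).1)
    (t : ↥(HypOct m)) (ht : IsSignFlipOn m (t : Equiv.Perm (Fin m × Bool)) 0 1)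
    (s₁ : ↥(HypOct m)) (hs₁ : IsBlockSwapOn m (s₁ : Equiv.Perm (Fin m × Bool)) 0 1) :
    Nonempty
      (Abelianization ((Fin m → Multiplicative (ZMod u)) ⋊[(permWreathAct m u).comp π]
          ↥(HypOct m)) ≃*
        (Multiplicative (ZMod u) × Multiplicative (ZMod 2) × Multiplicative (ZMod 2))) ∧
    Subgroup.closure
      {Abelianization.of
          (SemidirectProduct.inl (φ := (permWreathAct m u).comp π)
            (Pi.mulSingle (⟨0, by omega⟩ : Fin m)
              (Multiplicative.ofAdd (1 : ZMod u)))),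
        Abelianization.of
          (SemidirectProduct.inr (φ := (permWreathAct m u).comp π) s₁),
        Abelianization.of
          (SemidirectProduct.inr (φ := (permWreathAct m u).comp π) t)} = ⊤ := by
  classical
  haveI : NeZero u := ⟨by omega⟩
  have i0lt : 0 < m := by omega
  have i1lt : 1 < m := by omega
  set i0 : Fin m := ⟨0, i0lt⟩ with hi0def
  set i1 : Fin m := ⟨1, i1lt⟩ with hi1def
  have hi01 : i0 ≠ i1 := by
    intro h
    have := congrArg Fin.val h
    simp [hi0def, hi1def] at this
  have hs : s₁ = Lhom (Equiv.swap i0 i1) := s1_eq hm s₁ hs₁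
  have htq : t = fliph (fun a => decide ((a : ℕ) = 0)) := t_eq t ht
  have hπL : ∀ σ : Equiv.Perm (Fin m), π (Lhom σ) = σ := by
    intro σ
    apply Equiv.ext
    intro i
    rw [hπ]
    rfl
  have hπs : π s₁ = Equiv.swap i0 i1 := by rw [hs, hπL]
  have hπt : π t = 1 := by
    rw [htq]
    apply Equiv.ext
    intro i
    rw [hπ]
    rfl
  -- abbreviations
  have hs2 : s₁ * s₁ = 1 := by
    rw [hs, ← map_mul, Equiv.swap_mul_self, map_one]
  have ht2 : t * t = 1 := by rw [htq, fliph_sq]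
  -- the generation claim
  have key : Subgroup.closure
      {Abelianization.of
          (SemidirectProduct.inl (φ := (permWreathAct m u).comp π)
            (Pi.mulSingle (⟨0, by omega⟩ : Fin m)
              (Multiplicative.ofAdd (1 : ZMod u)))),
        Abelianization.of
          (SemidirectProduct.inr (φ := (permWreathAct m u).comp π) s₁),
        Abelianization.of
          (SemidirectProduct.inr (φ := (permWreathAct m u).comp π) t)} = ⊤ := by
    set C := Subgroup.closure
      {Abelianization.of
          (SemidirectProduct.inl (φ := (permWreathAct m u).comp π)
            (Pi.mulSingle (⟨0, by omega⟩ : Fin m)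
              (Multiplicative.ofAdd (1 : ZMod u)))),
        Abelianization.of
          (SemidirectProduct.inr (φ := (permWreathAct m u).comp π) s₁),
        Abelianization.of
          (SemidirectProduct.inr (φ := (permWreathAct m u).comp π) t)} with hC
    have hG1 : Abelianization.of
        (SemidirectProduct.inl (φ := (permWreathAct m u).comp π)
          (Pi.mulSingle i0 (Multiplicative.ofAdd (1 : ZMod u)))) ∈ C := by
      apply Subgroup.subset_closure; left; rfl
    have hSel : Abelianization.of
        (SemidirectProduct.inr (φ := (permWreathAct m u).comp π) s₁) ∈ C := by
      apply Subgroup.subset_closure; right; left; rfl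
    have hTel : Abelianization.of
        (SemidirectProduct.inr (φ := (permWreathAct m u).comp π) t) ∈ C := by
      apply Subgroup.subset_closure; right; right; rfl
    -- conjugation moves mulSingle coordinates
    have hconj1 : ∀ (σ : Equiv.Perm (Fin m)) (x : Multiplicative (ZMod u)) (i : Fin m),
        Abelianization.of
            (SemidirectProduct.inl (φ := (permWreathAct m u).comp π)
              (Pi.mulSingle (σ i) x)) =
          Abelianization.of
            (SemidirectProduct.inl (φ := (permWreathAct m u).comp π)
              (Pi.mulSingle i x)) := by
      intro σ x i
      have h1 : (Pi.mulSingle (σ i) x : Fin m → Multiplicative (ZMod u)) =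
          ((permWreathAct m u).comp π) (Lhom σ) (Pi.mulSingle i x) := by
        rw [act_apply π, hπL]
        funext j
        simp only [Pi.mulSingle_apply, Equiv.Perm.inv_eq_iff_eq]
      rw [h1, SemidirectProduct.inl_aut, map_inv, ab_conj]
    -- all coordinate generators
    have hmulSingle : ∀ (i : Fin m) (x : Multiplicative (ZMod u)),
        Abelianization.of
          (SemidirectProduct.inl (φ := (permWreathAct m u).comp π)
            (Pi.mulSingle i x)) ∈ C := by
      intro i x
      have h0 := hconj1 (Equiv.swap i0 i) x i0
      rw [Equiv.swap_apply_left] at h0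
      rw [h0]
      have hx : (Pi.mulSingle i0 x : Fin m → Multiplicative (ZMod u)) =
          (Pi.mulSingle i0 (Multiplicative.ofAdd (1 : ZMod u))) ^ (ZMod.val (Multiplicative.toAdd x)) := by
        rw [← Pi.mulSingle_pow]
        congr 1
        rw [← ofAdd_nsmul, nsmul_eq_mul, mul_one, ZMod.natCast_val, ZMod.cast_id]
        rfl
      rw [hx, map_pow, map_pow]
      exact pow_mem hG1 _
    have hinl : ∀ f : Fin m → Multiplicative (ZMod u),
        Abelianization.of
          (SemidirectProduct.inl (φ := (permWreathAct m u).comp π) f) ∈ C := by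
      intro f
      have hf : f = ∏ j : Fin m, Pi.mulSingle j (f j) := by
        funext i
        rw [Finset.prod_apply]
        exact (Fintype.prod_pi_mulSingle i f).symm
      have h2 : Abelianization.of
          (SemidirectProduct.inl (φ := (permWreathAct m u).comp π) f) =
          ∏ j : Fin m, Abelianization.of
            (SemidirectProduct.inl (φ := (permWreathAct m u).comp π)
              (Pi.mulSingle j (f j))) := by
        conv_lhs => rw [hf]
        exact map_prod (Abelianization.of.comp
          (SemidirectProduct.inl (φ := (permWreathAct m u).comp π))) _ _
      rw [h2]
      exact Subgroup.prod_mem _ (fun j _ => hmulSingle j (f j))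
    -- single sign flips
    have hflip1 : ∀ c : Fin m,
        Abelianization.of
          (SemidirectProduct.inr (φ := (permWreathAct m u).comp π)
            (fliph (fun a => decide (a = c)))) ∈ C := by
      intro c
      have hc : (fun a : Fin m => decide (a = c)) =
          fun a => decide ((((Equiv.swap i0 c)⁻¹ a : Fin m) : ℕ) = 0) := by
        funext a
        rw [decide_eq_decide]
        constructor
        · rintro rfl
          rw [Equiv.swap_inv, Equiv.swap_apply_right]
        · intro h
          have h2 : (Equiv.swap i0 c)⁻¹ a = i0 := Fin.ext h
          rwa [Equiv.Perm.inv_eq_iff_eq, Equiv.swap_apply_left] at h2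
      rw [hc]
      have hcj := conj_Lhom_fliph (Equiv.swap i0 c) (fun b : Fin m => decide ((b : ℕ) = 0))
      rw [← hcj, ab_conj_hom, ← htq]
      exact hTel
    -- all diagonal sign flips
    have hfliph : ∀ ε : Fin m → Bool,
        Abelianization.of
          (SemidirectProduct.inr (φ := (permWreathAct m u).comp π) (fliph ε)) ∈ C := by
      have hSf : ∀ Sf : Finset (Fin m),
          Abelianization.of
            (SemidirectProduct.inr (φ := (permWreathAct m u).comp π)
              (fliph (fun a => decide (a ∈ Sf)))) ∈ C := by
        intro Sf
        induction Sf using Finset.induction_on with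
        | empty =>
          have h1 : fliph (fun a : Fin m => decide (a ∈ (∅ : Finset (Fin m)))) = 1 := by
            apply Subtype.ext
            ext p : 1
            cases p with | mk a b => simp [fliph]
          rw [h1, map_one, map_one]
          exact one_mem _
        | @insert a Sf' ha ih =>
          have h1 : fliph (fun x : Fin m => decide (x ∈ insert a Sf')) =
              fliph (fun x => decide (x = a)) * fliph (fun x => decide (x ∈ Sf')) := by
            rw [fliph_mul]
            congr 1
            funext x
            by_cases hx : x = a
            · subst hx
              simp [Finset.mem_insert, ha]
            · simp [Finset.mem_insert, hx]
          rw [h1, map_mul, map_mul]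
          exact mul_mem (hflip1 a) ih
      intro ε
      have hε : ε = fun a => decide (a ∈ Finset.univ.filter (fun x => ε x = true)) := by
        funext a
        by_cases h : ε a = true <;> simp [h]
      rw [hε]
      exact hSf _
    -- lifted permutations
    have hswap : ∀ a b : Fin m, a ≠ b →
        Abelianization.of
          (SemidirectProduct.inr (φ := (permWreathAct m u).comp π)
            (Lhom (Equiv.swap a b))) ∈ C := by
      intro a b hab
      set c := Equiv.swap i0 a b with hcdef
      set τ := Equiv.swap i0 a * Equiv.swap i1 c with hτdef
      have hτ0 : τ i0 = a := by
        rw [hτdef, Equiv.Perm.mul_apply]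
        have h1 : Equiv.swap i1 c i0 = i0 := by
          apply Equiv.swap_apply_of_ne_of_ne
          · exact hi01
          · intro h
            apply hab
            have : Equiv.swap i0 a c = Equiv.swap i0 a i0 := by rw [← h]
            rw [hcdef, Equiv.swap_apply_self, Equiv.swap_apply_left] at this
            exact this.symm
        rw [h1, Equiv.swap_apply_left]
      have hτ1 : τ i1 = b := by
        rw [hτdef, Equiv.Perm.mul_apply, Equiv.swap_apply_left, hcdef,
          Equiv.swap_apply_self]
      have hcj : Equiv.swap a b = τ * Equiv.swap i0 i1 * τ⁻¹ := by
        calc Equiv.swap a b = Equiv.swap (τ i0) (τ i1) := by rw [hτ0, hτ1]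
        _ = τ * Equiv.swap i0 i1 * τ⁻¹ := Equiv.swap_apply_apply τ i0 i1
      rw [hcj, map_mul Lhom, map_mul Lhom, map_inv Lhom, ab_conj_hom, ← hs]
      exact hSel
    have hLperm : ∀ σ : Equiv.Perm (Fin m),
        Abelianization.of
          (SemidirectProduct.inr (φ := (permWreathAct m u).comp π) (Lhom σ)) ∈ C := by
      intro σ
      have h1 : Subgroup.closure {σ : Equiv.Perm (Fin m) | σ.IsSwap} ≤
          Subgroup.comap
            ((Abelianization.of.comp
              (SemidirectProduct.inr (φ := (permWreathAct m u).comp π))).comp Lhom) C := by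
        rw [Subgroup.closure_le]
        rintro σ' ⟨a, b, hab, rfl⟩
        exact hswap a b hab
      have h2 : σ ∈ Subgroup.closure {σ : Equiv.Perm (Fin m) | σ.IsSwap} := by
        rw [Equiv.Perm.closure_isSwap]
        trivial
      exact h1 h2
    -- all of W
    have hinr : ∀ w : ↥(HypOct m),
        Abelianization.of
          (SemidirectProduct.inr (φ := (permWreathAct m u).comp π) w) ∈ C := by
      intro w
      have hd := decomp w (π w) (fun i => hπ w i)
      rw [hd, map_mul, map_mul]
      exact mul_mem (hfliph _) (hLperm _)
    rw [eq_top_iff]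
    rintro x -
    obtain ⟨g, rfl⟩ : ∃ g, Abelianization.of g = x := by
      obtain ⟨g, hg⟩ := Quotient.exists_rep x
      exact ⟨g, hg⟩
    rw [← SemidirectProduct.inl_left_mul_inr_right g, map_mul]
    exact mul_mem (hinl _) (hinr _)
  refine ⟨?_, key⟩
  set φb := Abelianization.lift (φfull π u) with hφbdef
  have hS2 : Abelianization.of
        (SemidirectProduct.inr (φ := (permWreathAct m u).comp π) s₁) *
      Abelianization.of
        (SemidirectProduct.inr (φ := (permWreathAct m u).comp π) s₁) = 1 := by
    rw [← map_mul, ← map_mul, hs2, map_one, map_one]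
  have hT2 : Abelianization.of
        (SemidirectProduct.inr (φ := (permWreathAct m u).comp π) t) *
      Abelianization.of
        (SemidirectProduct.inr (φ := (permWreathAct m u).comp π) t) = 1 := by
    rw [← map_mul, ← map_mul, ht2, map_one, map_one]
  set ψ1 := (Abelianization.of.comp
      (SemidirectProduct.inl (φ := (permWreathAct m u).comp π))).comp
      (MonoidHom.mulSingle (fun _ : Fin m => Multiplicative (ZMod u)) i0) with hψ1def
  set ψ2 := zmod2Hom _ hS2 with hψ2def
  set ψ3 := zmod2Hom _ hT2 with hψ3def
  set ψ := ψ1.coprod (ψ2.coprod ψ3) with hψdef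
  -- values of φb on generators
  have hφG1 : φb (Abelianization.of
      (SemidirectProduct.inl (φ := (permWreathAct m u).comp π)
        (Pi.mulSingle i0 (Multiplicative.ofAdd (1 : ZMod u))))) =
      (Multiplicative.ofAdd (1 : ZMod u), 1, 1) := by
    rw [hφbdef, Abelianization.lift_apply_of, φfull_inl]
    congr 1
    show (∏ j : Fin m, Pi.mulSingle i0 (Multiplicative.ofAdd (1 : ZMod u)) j) = _
    exact Fintype.prod_pi_mulSingle' i0 _
  have hflipS : flipChar s₁ = 1 := by
    rw [flipChar_apply]
    have h1 : ∀ a : Fin m,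
        bsign (((s₁ : Equiv.Perm (Fin m × Bool)) (a, false)).2) = 0 := by
      intro a
      rw [(hs₁ (a, false)).2]
      rfl
    simp [h1]
  have hflipT : flipChar t = Multiplicative.ofAdd (1 : ZMod 2) := by
    rw [flipChar_apply]
    congr 1
    have h1 : ∀ a : Fin m,
        bsign (((t : Equiv.Perm (Fin m × Bool)) (a, false)).2) =
          if a = i0 then 1 else 0 := by
      intro a
      rw [(ht (a, false)).2]
      dsimp only
      by_cases h : (a : ℕ) = 0
      · have ha : a = i0 := Fin.ext h
        rw [if_pos (by omega), if_pos ha]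
        rfl
      · have ha : a ≠ i0 := fun hh => h (congrArg Fin.val hh)
        rw [if_neg (by omega), if_neg ha]
        rfl
    simp only [h1]
    rw [Finset.sum_ite_eq' Finset.univ i0 (fun _ => (1 : ZMod 2))]
    simp
  have hφS : φb (Abelianization.of
      (SemidirectProduct.inr (φ := (permWreathAct m u).comp π) s₁)) =
      (1, Multiplicative.ofAdd (1 : ZMod 2), 1) := by
    have hu2 : u2 (-1 : ℤˣ) = Multiplicative.ofAdd (1 : ZMod 2) := by
      show (if ((-1 : ℤˣ) = 1) then 1 else Multiplicative.ofAdd (1 : ZMod 2)) = _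
      rw [if_neg (by decide)]
    rw [hφbdef, Abelianization.lift_apply_of, φfull_inr, hπs,
      Equiv.Perm.sign_swap hi01, hflipS, hu2]
  have hφT : φb (Abelianization.of
      (SemidirectProduct.inr (φ := (permWreathAct m u).comp π) t)) =
      (1, 1, Multiplicative.ofAdd (1 : ZMod 2)) := by
    rw [hφbdef, Abelianization.lift_apply_of, φfull_inr, hπt, map_one, map_one, hflipT]
  -- values of ψ
  have hψ1one : ψ1 (Multiplicative.ofAdd (1 : ZMod u)) =
      Abelianization.of
        (SemidirectProduct.inl (φ := (permWreathAct m u).comp π)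
          (Pi.mulSingle i0 (Multiplicative.ofAdd (1 : ZMod u)))) := rfl
  have hψ2one : ψ2 (Multiplicative.ofAdd (1 : ZMod 2)) =
      Abelianization.of
        (SemidirectProduct.inr (φ := (permWreathAct m u).comp π) s₁) :=
    zmod2Hom_apply_one _ hS2
  have hψ3one : ψ3 (Multiplicative.ofAdd (1 : ZMod 2)) =
      Abelianization.of
        (SemidirectProduct.inr (φ := (permWreathAct m u).comp π) t) :=
    zmod2Hom_apply_one _ hT2
  have hψval : ∀ (a : Multiplicative (ZMod u)) (b c : Multiplicative (ZMod 2)),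
      ψ (a, b, c) = ψ1 a * (ψ2 b * ψ3 c) := fun _ _ _ => rfl
  -- composite identities
  have e1 : φb.comp ψ1 = MonoidHom.inl (Multiplicative (ZMod u))
      (Multiplicative (ZMod 2) × Multiplicative (ZMod 2)) := by
    apply multZModHom_ext
    rw [MonoidHom.comp_apply, hψ1one, hφG1]
    rfl
  have e2 : φb.comp ψ2 = (MonoidHom.inr (Multiplicative (ZMod u))
      (Multiplicative (ZMod 2) × Multiplicative (ZMod 2))).comp
      (MonoidHom.inl (Multiplicative (ZMod 2)) (Multiplicative (ZMod 2))) := by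
    apply multZModHom_ext
    rw [MonoidHom.comp_apply, hψ2one, hφS]
    rfl
  have e3 : φb.comp ψ3 = (MonoidHom.inr (Multiplicative (ZMod u))
      (Multiplicative (ZMod 2) × Multiplicative (ZMod 2))).comp
      (MonoidHom.inr (Multiplicative (ZMod 2)) (Multiplicative (ZMod 2))) := by
    apply multZModHom_ext
    rw [MonoidHom.comp_apply, hψ3one, hφT]
    rfl
  have hR : ∀ a : Multiplicative (ZMod u) ×
      Multiplicative (ZMod 2) × Multiplicative (ZMod 2), φb (ψ a) = a := by
    rintro ⟨a, b, c⟩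
    rw [hψval, map_mul, map_mul]
    have h1 : φb (ψ1 a) = (a, 1, 1) := DFunLike.congr_fun e1 a
    have h2 : φb (ψ2 b) = (1, b, 1) := DFunLike.congr_fun e2 b
    have h3 : φb (ψ3 c) = (1, 1, c) := DFunLike.congr_fun e3 c
    rw [h1, h2, h3]
    show ((a * (1 * 1) : Multiplicative (ZMod u)),
      (1 * (b * 1) : Multiplicative (ZMod 2)),
      (1 * (1 * c) : Multiplicative (ZMod 2))) = (a, b, c)
    simp
  have hL : ∀ x, ψ (φb x) = x := by
    intro x
    have hx : x ∈ Subgroup.closure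
      {Abelianization.of
          (SemidirectProduct.inl (φ := (permWreathAct m u).comp π)
            (Pi.mulSingle (⟨0, by omega⟩ : Fin m)
              (Multiplicative.ofAdd (1 : ZMod u)))),
        Abelianization.of
          (SemidirectProduct.inr (φ := (permWreathAct m u).comp π) s₁),
        Abelianization.of
          (SemidirectProduct.inr (φ := (permWreathAct m u).comp π) t)} := by
      rw [key]
      trivial
    refine Subgroup.closure_induction ?_ ?_ ?_ ?_ hx
    · intro y hy
      simp only [Set.mem_insert_iff, Set.mem_singleton_iff] at hy
      rcases hy with rfl | rfl | rfl
      · rw [show ((⟨0, by omega⟩ : Fin m)) = i0 from rfl, hφG1, hψval,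
          map_one ψ2, map_one ψ3, mul_one, mul_one, hψ1one]
      · rw [hφS, hψval, map_one ψ1, map_one ψ3, one_mul, mul_one, hψ2one]
      · rw [hφT, hψval, map_one ψ1, map_one ψ2, one_mul, one_mul, hψ3one]
    · simp
    · intro x y _ _ hx hy
      rw [map_mul, map_mul, hx, hy]
    · intro x _ hx
      rw [map_inv, map_inv, hx]
  exact ⟨⟨⟨φb, ψ, hL, hR⟩, map_mul φb⟩⟩
end

section
/- Let μ be a signed partition of n. There exists a unique linear character φ of C_{W_n}(w_μ) satisfying: φ(c_i) = ζ_{2k_i} for 1 ≤ i ≤ a, where μ⁻_i = 2^{l_i}·k_i with k_i odd; φ(d_j) = ζ_{μ⁺_j} for 1 ≤ j ≤ b; φ(x_i) = −1 for every i with μ⁻_i = μ⁻_{i+1}; φ(y_j) = 1 for every j with μ⁺_j = μ⁺_{j+1}; and φ(r_j) = (−1)^{μ⁺_j−1} for 1 ≤ j ≤ b. -/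
open scoped Classical

/-- The regular character of a finite group: `|G|` at the identity and `0` elsewhere. -/
noncomputable def regChar (G : Type*) [Group G] [Fintype G] : G → ℂ :=
  fun g => if g = 1 then (Fintype.card G : ℂ) else 0

/-- The class function on `G` induced from a linear character `φ` of a subgroup `H`:
`(Ind_H^G φ)(g) = |H|⁻¹ ∑_{x ∈ G, x⁻¹gx ∈ H} φ(x⁻¹gx)`. -/
noncomputable def indCF {G : Type*} [Group G] [Fintype G] {H : Subgroup G}
    (φ : ↥H →* ℂˣ) : G → ℂ :=
  fun g => (Nat.card ↥H : ℂ)⁻¹ *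
    ∑ x : G, if h : x⁻¹ * g * x ∈ H then ((φ ⟨x⁻¹ * g * x, h⟩ : ℂˣ) : ℂ) else 0

/-- `ζ_k = e^{2πi/k}`. -/
noncomputable def zeta (k : ℕ) : ℂ := Complex.exp (2 * Real.pi * Complex.I / (k : ℂ))

namespace S17

open Equiv List

variable {n : ℕ}

structure Ctx (n : ℕ) where
  μ : SignedPartition n
  c : Fin μ.neg.length → ↥(HypOct n)
  d : Fin μ.pos.length → ↥(HypOct n)
  x : Fin μ.neg.length → ↥(HypOct n)
  y : Fin μ.pos.length → ↥(HypOct n)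
  r : Fin μ.pos.length → ↥(HypOct n)
  hc : ∀ i : Fin μ.neg.length,
      IsNegCycleOn n (c i : Equiv.Perm (Fin n × Bool)) ((μ.neg.take (i : ℕ)).sum) (μ.neg.get i)
  hd : ∀ j : Fin μ.pos.length,
      IsPosCycleOn n (d j : Equiv.Perm (Fin n × Bool))
        (μ.neg.sum + (μ.pos.take (j : ℕ)).sum) (μ.pos.get j)
  hx : ∀ (i : Fin μ.neg.length) (hi : (i : ℕ) + 1 < μ.neg.length),
      μ.neg.get i = μ.neg.get ⟨(i : ℕ) + 1, hi⟩ →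
      IsBlockSwapOn n (x i : Equiv.Perm (Fin n × Bool)) ((μ.neg.take (i : ℕ)).sum) (μ.neg.get i)
  hy : ∀ (j : Fin μ.pos.length) (hj : (j : ℕ) + 1 < μ.pos.length),
      μ.pos.get j = μ.pos.get ⟨(j : ℕ) + 1, hj⟩ →
      IsBlockSwapOn n (y j : Equiv.Perm (Fin n × Bool))
        (μ.neg.sum + (μ.pos.take (j : ℕ)).sum) (μ.pos.get j)
  hr : ∀ j : Fin μ.pos.length,
      IsSignFlipOn n (r j : Equiv.Perm (Fin n × Bool))
        (μ.neg.sum + (μ.pos.take (j : ℕ)).sum) (μ.pos.get j)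
  w : ↥(HypOct n)
  hw : w = (List.ofFn c).prod * (List.ofFn d).prod
  hcC : ∀ i, c i ∈ Subgroup.centralizer {w}
  hdC : ∀ j, d j ∈ Subgroup.centralizer {w}
  hxC : ∀ i, x i ∈ Subgroup.centralizer {w}
  hyC : ∀ j, y j ∈ Subgroup.centralizer {w}
  hrC : ∀ j, r j ∈ Subgroup.centralizer {w}

namespace Ctx

variable (S : Ctx n)

def A : ℕ := S.μ.neg.length
def B : ℕ := S.μ.pos.length
def mN (i : Fin S.A) : ℕ := S.μ.neg.get i
def mP (j : Fin S.B) : ℕ := S.μ.pos.get j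
def bN (i : ℕ) : ℕ := (S.μ.neg.take i).sum
def bP (j : ℕ) : ℕ := S.μ.neg.sum + (S.μ.pos.take j).sum

lemma mN_pos (i : Fin S.A) : 0 < S.mN i := by
  have := List.get_mem S.μ.neg i
  exact S.μ.neg_pos _ (by simpa [mN] using this)

lemma mP_pos (j : Fin S.B) : 0 < S.mP j := by
  have := List.get_mem S.μ.pos j
  exact S.μ.pos_pos _ (by simpa [mP] using this)

lemma mN_mono {i i' : Fin S.A} (h : i ≤ i') : S.mN i ≤ S.mN i' := by
  rcases eq_or_lt_of_le h with h | h
  · exact le_of_eq (congrArg S.mN h)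
  · exact S.μ.neg_sorted.rel_get_of_lt h

lemma mP_anti {j j' : Fin S.B} (h : j ≤ j') : S.mP j' ≤ S.mP j := by
  rcases eq_or_lt_of_le h with h | h
  · exact le_of_eq (congrArg S.mP h.symm)
  · exact S.μ.pos_sorted.rel_get_of_lt h

lemma sum_take_mono {L : List ℕ} {i j : ℕ} (h : i ≤ j) :
    (L.take i).sum ≤ (L.take j).sum := by
  conv_rhs => rw [← List.take_append_drop i (L.take j)]
  rw [List.sum_append, List.take_take, min_eq_left h]
  omega

lemma bN_succ (i : Fin S.A) : S.bN ((i : ℕ) + 1) = S.bN i + S.mN i := by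
  have h := List.sum_take_succ S.μ.neg i i.isLt
  unfold bN mN
  rw [h]; rfl

lemma bP_succ (j : Fin S.B) : S.bP ((j : ℕ) + 1) = S.bP j + S.mP j := by
  have h := List.sum_take_succ S.μ.pos j j.isLt
  unfold bP mP
  rw [h]; change _ = _ + _ + S.μ.pos[(j : ℕ)]'j.isLt
  omega

lemma bN_mono : Monotone S.bN := fun _ _ h => sum_take_mono h

lemma bP_mono : Monotone S.bP := fun _ _ h => by
  unfold bP; have := sum_take_mono (L := S.μ.pos) h; omega

lemma bN_le_sum (i : ℕ) : S.bN i ≤ S.μ.neg.sum := by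
  unfold bN
  conv_rhs => rw [← List.take_append_drop i S.μ.neg]
  rw [List.sum_append]; omega

lemma bP_le_n (j : ℕ) : S.bP j ≤ n := by
  unfold bP
  have h1 : (S.μ.pos.take j).sum ≤ S.μ.pos.sum := by
    conv_rhs => rw [← List.take_append_drop j S.μ.pos]
    rw [List.sum_append]; omega
  have := S.μ.sum_eq; omega

def inN (i : Fin S.A) (v : ℕ) : Prop := S.bN i ≤ v ∧ v < S.bN i + S.mN i
def inP (j : Fin S.B) (v : ℕ) : Prop := S.bP j ≤ v ∧ v < S.bP j + S.mP j

lemma endN_le (i : Fin S.A) : S.bN i + S.mN i ≤ S.μ.neg.sum := by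
  rw [← S.bN_succ i]; exact S.bN_le_sum _

lemma endP_le (j : Fin S.B) : S.bP j + S.mP j ≤ n := by
  rw [← S.bP_succ j]; exact S.bP_le_n _

lemma sum_le_bP (j : Fin S.B) : S.μ.neg.sum ≤ S.bP j := by unfold bP; omega

lemma inN_lt (i : Fin S.A) {v : ℕ} (h : S.inN i v) : v < S.μ.neg.sum :=
  lt_of_lt_of_le h.2 (S.endN_le i)

lemma inN_lt_n (i : Fin S.A) {v : ℕ} (h : S.inN i v) : v < n := by
  have := S.inN_lt i h; have h2 := S.μ.sum_eq; omega

lemma inP_ge (j : Fin S.B) {v : ℕ} (h : S.inP j v) : S.μ.neg.sum ≤ v :=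
  le_trans (S.sum_le_bP j) h.1

lemma inP_lt_n (j : Fin S.B) {v : ℕ} (h : S.inP j v) : v < n :=
  lt_of_lt_of_le h.2 (S.endP_le j)

lemma not_inN_of_inP {i : Fin S.A} {j : Fin S.B} {v : ℕ} (h : S.inP j v) : ¬ S.inN i v :=
  fun h' => absurd (S.inN_lt i h') (not_lt.mpr (S.inP_ge j h))

lemma inN_inj {i i' : Fin S.A} {v : ℕ} (h : S.inN i v) (h' : S.inN i' v) : i = i' := by
  by_contra hne
  rcases Fin.lt_or_lt_of_ne hne with hlt | hlt
  · have : S.bN i + S.mN i ≤ S.bN i' := by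
      rw [← S.bN_succ i]; exact S.bN_mono hlt
    unfold inN at h h'; omega
  · have : S.bN i' + S.mN i' ≤ S.bN i := by
      rw [← S.bN_succ i']; exact S.bN_mono hlt
    unfold inN at h h'; omega

lemma inP_inj {j j' : Fin S.B} {v : ℕ} (h : S.inP j v) (h' : S.inP j' v) : j = j' := by
  by_contra hne
  rcases Fin.lt_or_lt_of_ne hne with hlt | hlt
  · have : S.bP j + S.mP j ≤ S.bP j' := by
      rw [← S.bP_succ j]; exact S.bP_mono hlt
    unfold inP at h h'; omega
  · have : S.bP j' + S.mP j' ≤ S.bP j := by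
      rw [← S.bP_succ j']; exact S.bP_mono hlt
    unfold inP at h h'; omega

lemma tile (L : List ℕ) (v : ℕ) (hv : v < L.sum) :
    ∃ k : Fin L.length, (L.take (k:ℕ)).sum ≤ v ∧ v < (L.take (k:ℕ)).sum + L.get k := by
  induction L generalizing v with
  | nil => simp at hv
  | cons a t ih =>
    rcases Nat.lt_or_ge v a with hva | hva
    · exact ⟨⟨0, by simp⟩, by simpa using hva⟩
    · have hlt : v - a < t.sum := by simp at hv; omega
      obtain ⟨k, h1, h2⟩ := ih (v - a) hlt
      refine ⟨k.succ, ?_, ?_⟩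
      · simp only [Fin.val_succ, List.take_succ_cons, List.sum_cons]; omega
      · have hg : (a :: t).get k.succ = t.get k := rfl
        simp only [Fin.val_succ, List.take_succ_cons, List.sum_cons, hg]; omega

lemma cover {v : ℕ} (hv : v < n) : (∃ i, S.inN i v) ∨ (∃ j, S.inP j v) := by
  rcases Nat.lt_or_ge v S.μ.neg.sum with h | h
  · obtain ⟨k, h1, h2⟩ := tile S.μ.neg v h
    exact Or.inl ⟨k, h1, h2⟩
  · have hlt : v - S.μ.neg.sum < S.μ.pos.sum := by have := S.μ.sum_eq; omega
    obtain ⟨k, h1, h2⟩ := tile S.μ.pos (v - S.μ.neg.sum) hlt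
    refine Or.inr ⟨k, ?_, ?_⟩ <;> simp only [inP, bP, mP] <;> omega

end Ctx
end S17

namespace S17

open Equiv

lemma point_eq {n : ℕ} {p q : Fin n × Bool} (h1 : ((p.1 : ℕ)) = (q.1 : ℕ)) (h2 : p.2 = q.2) :
    p = q := Prod.ext (Fin.ext h1) h2

variable {α : Type*} [DecidableEq α]

lemma prod_apply_fix (L : List (Equiv.Perm α)) (p : α) (h : ∀ σ ∈ L, σ p = p) :
    L.prod p = p := by
  induction L with
  | nil => rfl
  | cons a t ih =>
    rw [List.prod_cons, Equiv.Perm.mul_apply, ih (fun σ hσ => h σ (List.mem_cons_of_mem _ hσ)),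
      h a List.mem_cons_self]

lemma ofFn_prod_apply {s : ℕ} (f : Fin s → Equiv.Perm α) (p : α) (t : Fin s)
    (h1 : ∀ i, t < i → f i p = p) (h2 : ∀ i, i < t → f i (f t p) = f t p) :
    (List.ofFn f).prod p = f t p := by
  induction s with
  | zero => exact absurd t.isLt (by omega)
  | succ s ih =>
    rw [List.ofFn_succ, List.prod_cons, Equiv.Perm.mul_apply]
    rcases Fin.eq_zero_or_eq_succ t with rfl | ⟨t', rfl⟩
    · rw [prod_apply_fix]
      intro σ hσ
      rw [List.mem_ofFn] at hσ
      obtain ⟨i, rfl⟩ := hσ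
      exact h1 _ (Fin.succ_pos i)
    · rw [ih (fun i => f i.succ) t'
        (fun i hi => h1 i.succ (by simpa using hi))
        (fun i hi => h2 i.succ (by simpa using hi))]
      exact h2 0 t'.succ_pos

namespace Ctx

variable {n : ℕ} (S : Ctx n)

def W : Equiv.Perm (Fin n × Bool) := (S.w : Equiv.Perm (Fin n × Bool))
def cP (i : Fin S.A) : Equiv.Perm (Fin n × Bool) := (S.c i : Equiv.Perm (Fin n × Bool))
def dP (j : Fin S.B) : Equiv.Perm (Fin n × Bool) := (S.d j : Equiv.Perm (Fin n × Bool))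
def xP (i : Fin S.A) : Equiv.Perm (Fin n × Bool) := (S.x i : Equiv.Perm (Fin n × Bool))
def yP (j : Fin S.B) : Equiv.Perm (Fin n × Bool) := (S.y j : Equiv.Perm (Fin n × Bool))
def rP (j : Fin S.B) : Equiv.Perm (Fin n × Bool) := (S.r j : Equiv.Perm (Fin n × Bool))

def np (e : Bool) : Equiv.Perm (Fin n × Bool) := if e then negPt n else 1

lemma np_apply (e : Bool) (p : Fin n × Bool) : (np e p : Fin n × Bool) = (p.1, xor e p.2) := by
  cases e <;> simp [np, negPt] <;> rfl

lemma W_eq : S.W = (List.ofFn S.cP).prod * (List.ofFn S.dP).prod := by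
  have : S.W = (HypOct n).subtype S.w := rfl
  rw [this, S.hw, map_mul, map_list_prod, map_list_prod, List.map_ofFn, List.map_ofFn]
  rfl

-- restated structure hypotheses (definitional)
lemma hc' (i : Fin S.A) : IsNegCycleOn n (S.cP i) (S.bN i) (S.mN i) := S.hc i
lemma hd' (j : Fin S.B) : IsPosCycleOn n (S.dP j) (S.bP j) (S.mP j) := S.hd j
lemma hx' (i : Fin S.A) (hi : (i : ℕ) + 1 < S.A) (heq : S.mN i = S.mN ⟨(i : ℕ) + 1, hi⟩) :
    IsBlockSwapOn n (S.xP i) (S.bN i) (S.mN i) := S.hx i hi heq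
lemma hy' (j : Fin S.B) (hj : (j : ℕ) + 1 < S.B) (heq : S.mP j = S.mP ⟨(j : ℕ) + 1, hj⟩) :
    IsBlockSwapOn n (S.yP j) (S.bP j) (S.mP j) := S.hy j hj heq
lemma hr' (j : Fin S.B) : IsSignFlipOn n (S.rP j) (S.bP j) (S.mP j) := S.hr j

-- fixing lemmas
lemma c_fix (i : Fin S.A) (p : Fin n × Bool) (h : ¬ S.inN i (p.1 : ℕ)) : S.cP i p = p := by
  obtain ⟨h1, h2⟩ := S.hc' i p
  have hm := S.mN_pos i
  have hno : ¬ ((p.1 : ℕ) + 1 = S.bN i + S.mN i) := by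
    intro hE; exact h ⟨by omega, by omega⟩
  have hno2 : ¬ (S.bN i ≤ (p.1 : ℕ) ∧ (p.1 : ℕ) + 1 < S.bN i + S.mN i) := by
    intro hE; exact h ⟨hE.1, by omega⟩
  rw [if_neg hno, if_neg hno2] at h1
  rw [if_neg hno] at h2
  exact point_eq h1 h2

lemma d_fix (j : Fin S.B) (p : Fin n × Bool) (h : ¬ S.inP j (p.1 : ℕ)) : S.dP j p = p := by
  obtain ⟨h1, h2⟩ := S.hd' j p
  have hm := S.mP_pos j
  have hno : ¬ ((p.1 : ℕ) + 1 = S.bP j + S.mP j) := by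
    intro hE; exact h ⟨by omega, by omega⟩
  have hno2 : ¬ (S.bP j ≤ (p.1 : ℕ) ∧ (p.1 : ℕ) + 1 < S.bP j + S.mP j) := by
    intro hE; exact h ⟨hE.1, by omega⟩
  rw [if_neg hno, if_neg hno2] at h1
  exact point_eq h1 h2

lemma r_fix (j : Fin S.B) (p : Fin n × Bool) (h : ¬ S.inP j (p.1 : ℕ)) : S.rP j p = p := by
  obtain ⟨h1, h2⟩ := S.hr' j p
  rw [if_neg (fun hE => h ⟨hE.1, hE.2⟩)] at h2
  exact point_eq (congrArg _ h1) h2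

lemma x_fix (i : Fin S.A) (hi : (i : ℕ) + 1 < S.A)
    (heq : S.mN i = S.mN ⟨(i : ℕ) + 1, hi⟩) (p : Fin n × Bool)
    (h : ¬ (S.bN i ≤ (p.1 : ℕ) ∧ (p.1 : ℕ) < S.bN i + 2 * S.mN i)) : S.xP i p = p := by
  obtain ⟨h1, h2⟩ := S.hx' i hi heq p
  rw [if_neg (fun hE => h ⟨hE.1, by omega⟩), if_neg (fun hE => h ⟨by omega, hE.2⟩)] at h1
  exact point_eq h1 h2

lemma y_fix (j : Fin S.B) (hj : (j : ℕ) + 1 < S.B)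
    (heq : S.mP j = S.mP ⟨(j : ℕ) + 1, hj⟩) (p : Fin n × Bool)
    (h : ¬ (S.bP j ≤ (p.1 : ℕ) ∧ (p.1 : ℕ) < S.bP j + 2 * S.mP j)) : S.yP j p = p := by
  obtain ⟨h1, h2⟩ := S.hy' j hj heq p
  rw [if_neg (fun hE => h ⟨hE.1, by omega⟩), if_neg (fun hE => h ⟨by omega, hE.2⟩)] at h1
  exact point_eq h1 h2

lemma c_stab (i : Fin S.A) (p : Fin n × Bool) (h : S.inN i (p.1 : ℕ)) :
    S.inN i ((S.cP i p).1 : ℕ) := by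
  obtain ⟨h1, h2⟩ := S.hc' i p
  have hm := S.mN_pos i
  rw [h1]
  unfold inN at h ⊢
  split
  · omega
  · split <;> omega

lemma d_stab (j : Fin S.B) (p : Fin n × Bool) (h : S.inP j (p.1 : ℕ)) :
    S.inP j ((S.dP j p).1 : ℕ) := by
  obtain ⟨h1, h2⟩ := S.hd' j p
  have hm := S.mP_pos j
  rw [h1]
  unfold inP at h ⊢
  split
  · omega
  · split <;> omega

lemma inN_not {i i' : Fin S.A} {v : ℕ} (hne : i ≠ i') (h : S.inN i v) : ¬ S.inN i' v :=
  fun h' => hne (S.inN_inj h h')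

lemma inP_not {j j' : Fin S.B} {v : ℕ} (hne : j ≠ j') (h : S.inP j v) : ¬ S.inP j' v :=
  fun h' => hne (S.inP_inj h h')

lemma w_on_N (i : Fin S.A) (p : Fin n × Bool) (h : S.inN i (p.1 : ℕ)) :
    S.W p = S.cP i p := by
  rw [S.W_eq, Equiv.Perm.mul_apply]
  have hd : (List.ofFn S.dP).prod p = p := by
    apply prod_apply_fix
    intro σ hσ
    rw [List.mem_ofFn] at hσ
    obtain ⟨j, rfl⟩ := hσ
    exact S.d_fix j p (fun h' => absurd (S.inN_lt i h) (not_lt.mpr (S.inP_ge j h')))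
  rw [hd]
  apply ofFn_prod_apply _ _ i
  · exact fun i' hi' => S.c_fix i' p (S.inN_not (Fin.ne_of_lt hi') h)
  · exact fun i' hi' => S.c_fix i' _ (S.inN_not (Fin.ne_of_gt hi') (S.c_stab i p h))

lemma w_on_P (j : Fin S.B) (p : Fin n × Bool) (h : S.inP j (p.1 : ℕ)) :
    S.W p = S.dP j p := by
  rw [S.W_eq, Equiv.Perm.mul_apply]
  have hd : (List.ofFn S.dP).prod p = S.dP j p := by
    apply ofFn_prod_apply _ _ j
    · exact fun j' hj' => S.d_fix j' p (S.inP_not (Fin.ne_of_lt hj') h)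
    · exact fun j' hj' => S.d_fix j' _ (S.inP_not (Fin.ne_of_gt hj') (S.d_stab j p h))
  rw [hd]
  apply prod_apply_fix
  intro σ hσ
  rw [List.mem_ofFn] at hσ
  obtain ⟨i, rfl⟩ := hσ
  exact S.c_fix i _ (fun h' => absurd (S.inN_lt i h') (not_lt.mpr (S.inP_ge j (S.d_stab j p h))))

end Ctx
end S17

namespace S17
namespace Ctx

open Equiv

variable {n : ℕ} (S : Ctx n)

def Cz : Subgroup ↥(HypOct n) := Subgroup.centralizer {S.w}

def piHom : ↥S.Cz →* Equiv.Perm (Fin n × Bool) :=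
  (HypOct n).subtype.comp S.Cz.subtype

def pi (g : ↥S.Cz) : Equiv.Perm (Fin n × Bool) := S.piHom g

lemma pi_mul (g h : ↥S.Cz) (p : Fin n × Bool) :
    S.pi (g * h) p = S.pi g (S.pi h p) := by
  rw [pi, map_mul]; rfl

lemma pi_one (p : Fin n × Bool) : S.pi 1 p = p := by
  rw [pi, map_one]; rfl

lemma pi_inv (g : ↥S.Cz) (p : Fin n × Bool) : S.pi g⁻¹ (S.pi g p) = p := by
  rw [pi, pi, map_inv]
  exact Equiv.symm_apply_apply _ _

lemma pi_inj (g : ↥S.Cz) {p q : Fin n × Bool} (h : S.pi g p = S.pi g q) : p = q :=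
  (S.pi g).injective h

lemma pi_w (g : ↥S.Cz) (p : Fin n × Bool) : S.pi g (S.W p) = S.W (S.pi g p) := by
  have hg : (g : ↥(HypOct n)) ∈ Subgroup.centralizer {S.w} := g.2
  rw [Subgroup.mem_centralizer_iff] at hg
  have h := hg S.w (Set.mem_singleton _)
  have h2 : S.W * S.pi g = S.pi g * S.W := by
    have := congrArg (fun z => ((z : ↥(HypOct n)) : Equiv.Perm (Fin n × Bool))) h
    exact this
  calc S.pi g (S.W p) = (S.pi g * S.W) p := rfl
    _ = (S.W * S.pi g) p := by rw [h2]
    _ = S.W (S.pi g p) := rfl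

lemma pi_w_pow (g : ↥S.Cz) (t : ℕ) (p : Fin n × Bool) :
    S.pi g ((S.W ^ t) p) = (S.W ^ t) (S.pi g p) := by
  induction t with
  | zero => rfl
  | succ t ih =>
    rw [pow_succ', Equiv.Perm.mul_apply, Equiv.Perm.mul_apply, S.pi_w, ih]

lemma pi_negPt (g : ↥S.Cz) (p : Fin n × Bool) :
    S.pi g (negPt n p) = negPt n (S.pi g p) := by
  have hg : ((g : ↥(HypOct n)) : Equiv.Perm (Fin n × Bool)) ∈ Subgroup.centralizer {negPt n} :=
    (g : ↥(HypOct n)).2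
  rw [Subgroup.mem_centralizer_iff] at hg
  have h := hg (negPt n) (Set.mem_singleton _)
  have hpi : S.pi g = ((g : ↥(HypOct n)) : Equiv.Perm (Fin n × Bool)) := rfl
  rw [hpi]
  calc ((g : ↥(HypOct n)) : Equiv.Perm (Fin n × Bool)) (negPt n p)
      = (((g : ↥(HypOct n)) : Equiv.Perm (Fin n × Bool)) * negPt n) p := rfl
    _ = (negPt n * ((g : ↥(HypOct n)) : Equiv.Perm (Fin n × Bool))) p := by rw [← h]
    _ = negPt n (((g : ↥(HypOct n)) : Equiv.Perm (Fin n × Bool)) p) := rfl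

lemma pi_np (g : ↥S.Cz) (e : Bool) (p : Fin n × Bool) :
    S.pi g (np e p) = np e (S.pi g p) := by
  cases e
  · rfl
  · exact S.pi_negPt g p

lemma W_negPt (p : Fin n × Bool) : S.W (negPt n p) = negPt n (S.W p) := by
  have hg : (S.w : Equiv.Perm (Fin n × Bool)) ∈ Subgroup.centralizer {negPt n} := S.w.2
  rw [Subgroup.mem_centralizer_iff] at hg
  have h := hg (negPt n) (Set.mem_singleton _)
  have hW : S.W = (S.w : Equiv.Perm (Fin n × Bool)) := rfl
  rw [hW]
  calc (S.w : Equiv.Perm (Fin n × Bool)) (negPt n p)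
      = ((S.w : Equiv.Perm (Fin n × Bool)) * negPt n) p := rfl
    _ = (negPt n * (S.w : Equiv.Perm (Fin n × Bool))) p := by rw [← h]
    _ = negPt n ((S.w : Equiv.Perm (Fin n × Bool)) p) := rfl

lemma W_pow_negPt (t : ℕ) (p : Fin n × Bool) :
    (S.W ^ t) (negPt n p) = negPt n ((S.W ^ t) p) := by
  induction t with
  | zero => rfl
  | succ t ih => rw [pow_succ', Equiv.Perm.mul_apply, Equiv.Perm.mul_apply, ih, S.W_negPt]

lemma W_pow_np (t : ℕ) (e : Bool) (p : Fin n × Bool) :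
    (S.W ^ t) (np e p) = np e ((S.W ^ t) p) := by
  cases e
  · rfl
  · exact S.W_pow_negPt t p

lemma W_pow_add_apply (s t : ℕ) (p : Fin n × Bool) :
    (S.W ^ (s + t)) p = (S.W ^ s) ((S.W ^ t) p) := by
  rw [pow_add]; rfl

-- single step lemmas
lemma wN_mid (i : Fin S.A) (p : Fin n × Bool) (h : S.inN i (p.1 : ℕ))
    (h2 : (p.1 : ℕ) + 1 < S.bN i + S.mN i) :
    ((S.W p).1 : ℕ) = (p.1 : ℕ) + 1 ∧ (S.W p).2 = p.2 := by
  rw [S.w_on_N i p h]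
  obtain ⟨h1', h2'⟩ := S.hc' i p
  rw [if_neg (by omega), if_pos ⟨h.1, h2⟩] at h1'
  rw [if_neg (by omega)] at h2'
  exact ⟨h1', h2'⟩

lemma wN_last (i : Fin S.A) (p : Fin n × Bool) (h : S.inN i (p.1 : ℕ))
    (h2 : (p.1 : ℕ) + 1 = S.bN i + S.mN i) :
    ((S.W p).1 : ℕ) = S.bN i ∧ (S.W p).2 = !p.2 := by
  rw [S.w_on_N i p h]
  obtain ⟨h1', h2'⟩ := S.hc' i p
  rw [if_pos h2] at h1' h2'
  exact ⟨h1', h2'⟩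

lemma wP_mid (j : Fin S.B) (p : Fin n × Bool) (h : S.inP j (p.1 : ℕ))
    (h2 : (p.1 : ℕ) + 1 < S.bP j + S.mP j) :
    ((S.W p).1 : ℕ) = (p.1 : ℕ) + 1 ∧ (S.W p).2 = p.2 := by
  rw [S.w_on_P j p h]
  obtain ⟨h1', h2'⟩ := S.hd' j p
  rw [if_neg (by omega), if_pos ⟨h.1, h2⟩] at h1'
  exact ⟨h1', h2'⟩

lemma wP_last (j : Fin S.B) (p : Fin n × Bool) (h : S.inP j (p.1 : ℕ))
    (h2 : (p.1 : ℕ) + 1 = S.bP j + S.mP j) :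
    ((S.W p).1 : ℕ) = S.bP j ∧ (S.W p).2 = p.2 := by
  rw [S.w_on_P j p h]
  obtain ⟨h1', h2'⟩ := S.hd' j p
  rw [if_pos h2] at h1'
  exact ⟨h1', h2'⟩

lemma wN_stab (i : Fin S.A) (p : Fin n × Bool) (h : S.inN i (p.1 : ℕ)) :
    S.inN i ((S.W p).1 : ℕ) := by
  rw [S.w_on_N i p h]; exact S.c_stab i p h

lemma wP_stab (j : Fin S.B) (p : Fin n × Bool) (h : S.inP j (p.1 : ℕ)) :
    S.inP j ((S.W p).1 : ℕ) := by
  rw [S.w_on_P j p h]; exact S.d_stab j p h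

lemma wP_sign (j : Fin S.B) (p : Fin n × Bool) (h : S.inP j (p.1 : ℕ)) :
    (S.W p).2 = p.2 := by
  rw [S.w_on_P j p h]; exact (S.hd' j p).2

lemma w_pow_N_stab (i : Fin S.A) (t : ℕ) (p : Fin n × Bool) (h : S.inN i (p.1 : ℕ)) :
    S.inN i (((S.W ^ t) p).1 : ℕ) := by
  induction t with
  | zero => exact h
  | succ t ih => rw [pow_succ', Equiv.Perm.mul_apply]; exact S.wN_stab i _ ih

lemma w_pow_P_stab (j : Fin S.B) (t : ℕ) (p : Fin n × Bool) (h : S.inP j (p.1 : ℕ)) :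
    S.inP j (((S.W ^ t) p).1 : ℕ) ∧ ((S.W ^ t) p).2 = p.2 := by
  induction t with
  | zero => exact ⟨h, rfl⟩
  | succ t ih =>
    rw [pow_succ', Equiv.Perm.mul_apply]
    exact ⟨S.wP_stab j _ ih.1, by rw [S.wP_sign j _ ih.1]; exact ih.2⟩

-- moving forward t steps inside a block (neg)
lemma w_pow_N (i : Fin S.A) (t : ℕ) (p : Fin n × Bool) (h : S.inN i (p.1 : ℕ))
    (ht : (p.1 : ℕ) + t < S.bN i + S.mN i) :
    (((S.W ^ t) p).1 : ℕ) = (p.1 : ℕ) + t ∧ ((S.W ^ t) p).2 = p.2 := by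
  induction t with
  | zero => exact ⟨rfl, rfl⟩
  | succ t ih =>
    obtain ⟨ih1, ih2⟩ := ih (by omega)
    rw [pow_succ', Equiv.Perm.mul_apply]
    have hmem : S.inN i (((S.W ^ t) p).1 : ℕ) := S.w_pow_N_stab i t p h
    obtain ⟨e1, e2⟩ := S.wN_mid i _ hmem (by omega)
    exact ⟨by omega, by rw [e2, ih2]⟩

lemma w_pow_P (j : Fin S.B) (t : ℕ) (p : Fin n × Bool) (h : S.inP j (p.1 : ℕ))
    (ht : (p.1 : ℕ) + t < S.bP j + S.mP j) :
    (((S.W ^ t) p).1 : ℕ) = (p.1 : ℕ) + t ∧ ((S.W ^ t) p).2 = p.2 := by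
  induction t with
  | zero => exact ⟨rfl, rfl⟩
  | succ t ih =>
    obtain ⟨ih1, ih2⟩ := ih (by omega)
    rw [pow_succ', Equiv.Perm.mul_apply]
    have hmem : S.inP j (((S.W ^ t) p).1 : ℕ) := (S.w_pow_P_stab j t p h).1
    obtain ⟨e1, e2⟩ := S.wP_mid j _ hmem (by omega)
    exact ⟨by omega, by rw [e2, ih2]⟩

end Ctx
end S17

namespace S17
namespace Ctx

open Equiv

variable {n : ℕ} (S : Ctx n)

def pt (v : ℕ) (h : v < n) (e : Bool) : Fin n × Bool := (⟨v, h⟩, e)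

lemma inN_base (i : Fin S.A) : S.inN i (S.bN i) := ⟨le_rfl, by have := S.mN_pos i; omega⟩
lemma inP_base (j : Fin S.B) : S.inP j (S.bP j) := ⟨le_rfl, by have := S.mP_pos j; omega⟩

lemma bN_lt_n (i : Fin S.A) : S.bN i < n := S.inN_lt_n i (S.inN_base i)
lemma bP_lt_n (j : Fin S.B) : S.bP j < n := S.inP_lt_n j (S.inP_base j)

def BPn (i : Fin S.A) : Fin n × Bool := pt (S.bN i) (S.bN_lt_n i) false
def BPp (j : Fin S.B) : Fin n × Bool := pt (S.bP j) (S.bP_lt_n j) false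

@[simp] lemma BPn_fst (i : Fin S.A) : ((S.BPn i).1 : ℕ) = S.bN i := rfl
@[simp] lemma BPn_snd (i : Fin S.A) : (S.BPn i).2 = false := rfl
@[simp] lemma BPp_fst (j : Fin S.B) : ((S.BPp j).1 : ℕ) = S.bP j := rfl
@[simp] lemma BPp_snd (j : Fin S.B) : (S.BPp j).2 = false := rfl

-- negative orbit structure
lemma pow_BPn_lo (i : Fin S.A) (t : ℕ) (ht : t < S.mN i) :
    (((S.W ^ t) (S.BPn i)).1 : ℕ) = S.bN i + t ∧ ((S.W ^ t) (S.BPn i)).2 = false :=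
  S.w_pow_N i t (S.BPn i) (S.inN_base i) (by simpa using ht)

lemma pow_BPn_m (i : Fin S.A) : (S.W ^ (S.mN i)) (S.BPn i) = negPt n (S.BPn i) := by
  have hm := S.mN_pos i
  rw [show S.mN i = 1 + (S.mN i - 1) from by omega, W_pow_add_apply, pow_one]
  obtain ⟨e1, e2⟩ := S.pow_BPn_lo i (S.mN i - 1) (by omega)
  have hmem : S.inN i (((S.W ^ (S.mN i - 1)) (S.BPn i)).1 : ℕ) :=
    S.w_pow_N_stab i _ _ (S.inN_base i)
  obtain ⟨f1, f2⟩ := S.wN_last i _ hmem (by omega)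
  apply point_eq
  · rw [f1]; rfl
  · rw [f2, e2]; rfl

lemma pow_BPn_hi (i : Fin S.A) (t : ℕ) (ht1 : S.mN i ≤ t) (ht2 : t < 2 * S.mN i) :
    (((S.W ^ t) (S.BPn i)).1 : ℕ) = S.bN i + (t - S.mN i) ∧ ((S.W ^ t) (S.BPn i)).2 = true := by
  obtain ⟨t', rfl⟩ : ∃ t', t = t' + S.mN i := ⟨t - S.mN i, by omega⟩
  rw [W_pow_add_apply, S.pow_BPn_m i]
  have hnp : negPt n (S.BPn i) = pt (S.bN i) (S.bN_lt_n i) true := rfl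
  rw [hnp]
  have hc : (((pt (S.bN i) (S.bN_lt_n i) true : Fin n × Bool)).1 : ℕ) = S.bN i := rfl
  obtain ⟨a, b⟩ := S.w_pow_N i t' (pt (S.bN i) (S.bN_lt_n i) true) (S.inN_base i)
    (by rw [hc]; omega)
  rw [hc] at a
  exact ⟨by rw [a]; omega, b⟩

lemma pow_BPn_2m (i : Fin S.A) : (S.W ^ (2 * S.mN i)) (S.BPn i) = S.BPn i := by
  have : 2 * S.mN i = S.mN i + S.mN i := by omega
  rw [this, W_pow_add_apply, S.pow_BPn_m i]
  have : (S.W ^ S.mN i) (negPt n (S.BPn i)) = negPt n ((S.W ^ S.mN i) (S.BPn i)) :=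
    S.W_pow_negPt _ _
  rw [this, S.pow_BPn_m i]
  apply point_eq <;> rfl

lemma pow_BPn_mod (i : Fin S.A) (t : ℕ) :
    (S.W ^ t) (S.BPn i) = (S.W ^ (t % (2 * S.mN i))) (S.BPn i) := by
  conv_lhs => rw [show t = 2 * S.mN i * (t / (2 * S.mN i)) + t % (2 * S.mN i) from
    (Nat.div_add_mod t (2 * S.mN i)).symm]
  rw [add_comm, W_pow_add_apply]
  congr 1
  induction (t / (2 * S.mN i)) with
  | zero => rfl
  | succ q ih =>
    rw [Nat.mul_succ, W_pow_add_apply, S.pow_BPn_2m i, ih]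

lemma pow_BPn_inj (i : Fin S.A) {t t' : ℕ} (ht : t < 2 * S.mN i) (ht' : t' < 2 * S.mN i)
    (h : (S.W ^ t) (S.BPn i) = (S.W ^ t') (S.BPn i)) : t = t' := by
  have key : ∀ s : ℕ, s < 2 * S.mN i →
      ((((S.W ^ s) (S.BPn i)).1 : ℕ), ((S.W ^ s) (S.BPn i)).2) =
        (if s < S.mN i then (S.bN i + s, false) else (S.bN i + (s - S.mN i), true)) := by
    intro s hs
    split
    next hlt => obtain ⟨a, b⟩ := S.pow_BPn_lo i s hlt; rw [a, b]
    next hge => obtain ⟨a, b⟩ := S.pow_BPn_hi i s (by omega) hs; rw [a, b]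
  have k1 := key t ht
  have k2 := key t' ht'
  rw [h] at k1
  rw [k2] at k1
  by_cases c1 : t < S.mN i <;> by_cases c2 : t' < S.mN i <;>
    simp [c1, c2, Prod.ext_iff] at k1 <;> omega

lemma pow_BPn_fix_iff (i : Fin S.A) (t : ℕ) :
    (S.W ^ t) (S.BPn i) = S.BPn i ↔ 2 * S.mN i ∣ t := by
  constructor
  · intro h
    rw [S.pow_BPn_mod i] at h
    have h0 : (S.W ^ 0) (S.BPn i) = S.BPn i := rfl
    have := S.pow_BPn_inj i (Nat.mod_lt _ (by have := S.mN_pos i; omega)) (by have := S.mN_pos i; omega) (h.trans h0.symm)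
    exact Nat.dvd_iff_mod_eq_zero.mpr this
  · intro ⟨k, hk⟩
    rw [hk, S.pow_BPn_mod i, Nat.mul_mod_right]
    rfl

-- positive orbit structure
lemma pow_BPp_lo (j : Fin S.B) (t : ℕ) (ht : t < S.mP j) :
    (((S.W ^ t) (S.BPp j)).1 : ℕ) = S.bP j + t ∧ ((S.W ^ t) (S.BPp j)).2 = false :=
  S.w_pow_P j t (S.BPp j) (S.inP_base j) (by simpa using ht)

lemma pow_BPp_m (j : Fin S.B) : (S.W ^ (S.mP j)) (S.BPp j) = S.BPp j := by
  have hm := S.mP_pos j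
  rw [show S.mP j = 1 + (S.mP j - 1) from by omega, W_pow_add_apply, pow_one]
  obtain ⟨e1, e2⟩ := S.pow_BPp_lo j (S.mP j - 1) (by omega)
  have hmem : S.inP j (((S.W ^ (S.mP j - 1)) (S.BPp j)).1 : ℕ) :=
    (S.w_pow_P_stab j _ _ (S.inP_base j)).1
  obtain ⟨f1, f2⟩ := S.wP_last j _ hmem (by omega)
  apply point_eq
  · rw [f1]; rfl
  · rw [f2, e2]; rfl

lemma pow_BPp_mod (j : Fin S.B) (t : ℕ) :
    (S.W ^ t) (S.BPp j) = (S.W ^ (t % S.mP j)) (S.BPp j) := by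
  conv_lhs => rw [show t = S.mP j * (t / S.mP j) + t % S.mP j from (Nat.div_add_mod t _).symm]
  rw [add_comm, W_pow_add_apply]
  congr 1
  induction (t / S.mP j) with
  | zero => rfl
  | succ q ih => rw [Nat.mul_succ, W_pow_add_apply, S.pow_BPp_m j, ih]

lemma pow_BPp_inj (j : Fin S.B) {t t' : ℕ} (ht : t < S.mP j) (ht' : t' < S.mP j)
    (h : (S.W ^ t) (S.BPp j) = (S.W ^ t') (S.BPp j)) : t = t' := by
  obtain ⟨a1, _⟩ := S.pow_BPp_lo j t ht
  obtain ⟨a2, _⟩ := S.pow_BPp_lo j t' ht'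
  rw [h, a2] at a1
  omega

lemma pow_BPp_fix_iff (j : Fin S.B) (t : ℕ) :
    (S.W ^ t) (S.BPp j) = S.BPp j ↔ S.mP j ∣ t := by
  constructor
  · intro h
    rw [S.pow_BPp_mod j] at h
    have h0 : (S.W ^ 0) (S.BPp j) = S.BPp j := rfl
    have := S.pow_BPp_inj j (Nat.mod_lt _ (S.mP_pos j)) (S.mP_pos j) (h.trans h0.symm)
    exact Nat.dvd_iff_mod_eq_zero.mpr this
  · intro ⟨k, hk⟩
    rw [hk, S.pow_BPp_mod j, Nat.mul_mod_right]
    rfl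

-- representation of block points
lemma reprN (i : Fin S.A) (p : Fin n × Bool) (h : S.inN i (p.1 : ℕ)) :
    ∃ t, t < 2 * S.mN i ∧ p = (S.W ^ t) (S.BPn i) := by
  cases hp : p.2 with
  | false =>
    refine ⟨(p.1 : ℕ) - S.bN i, by unfold inN at h; omega, ?_⟩
    obtain ⟨a, b⟩ := S.pow_BPn_lo i ((p.1 : ℕ) - S.bN i) (by unfold inN at h; omega)
    refine point_eq ?_ ?_
    · rw [a]; unfold inN at h; omega
    · rw [hp, b]
  | true =>
    refine ⟨(p.1 : ℕ) - S.bN i + S.mN i, by unfold inN at h; omega, ?_⟩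
    obtain ⟨a, b⟩ := S.pow_BPn_hi i ((p.1 : ℕ) - S.bN i + S.mN i) (by omega)
      (by unfold inN at h; omega)
    refine point_eq ?_ ?_
    · rw [a]; unfold inN at h; omega
    · rw [hp, b]

lemma reprP (j : Fin S.B) (p : Fin n × Bool) (h : S.inP j (p.1 : ℕ)) :
    ∃ t e, t < S.mP j ∧ p = (S.W ^ t) (np e (S.BPp j)) := by
  refine ⟨(p.1 : ℕ) - S.bP j, p.2, by unfold inP at h; omega, ?_⟩
  rw [S.W_pow_np]
  obtain ⟨a, b⟩ := S.pow_BPp_lo j ((p.1 : ℕ) - S.bP j) (by unfold inP at h; omega)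
  rw [np_apply]
  refine point_eq ?_ ?_
  · rw [a]; unfold inP at h; omega
  · rw [b, Bool.xor_false]

-- general-point facts
lemma pow_m_N (i : Fin S.A) (p : Fin n × Bool) (h : S.inN i (p.1 : ℕ)) :
    (S.W ^ (S.mN i)) p = negPt n p := by
  obtain ⟨t, ht, rfl⟩ := S.reprN i p h
  rw [← W_pow_add_apply, add_comm, W_pow_add_apply, S.pow_BPn_m i, S.W_pow_negPt]

lemma fix_iff_N (i : Fin S.A) (p : Fin n × Bool) (h : S.inN i (p.1 : ℕ)) (t : ℕ) :
    (S.W ^ t) p = p ↔ 2 * S.mN i ∣ t := by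
  obtain ⟨s, hs, rfl⟩ := S.reprN i p h
  rw [← W_pow_add_apply, add_comm, W_pow_add_apply]
  rw [← S.pow_BPn_fix_iff i t]
  exact ⟨fun hE => (S.W ^ s).injective hE, fun hE => by rw [hE]⟩

lemma fix_iff_P (j : Fin S.B) (p : Fin n × Bool) (h : S.inP j (p.1 : ℕ)) (t : ℕ) :
    (S.W ^ t) p = p ↔ S.mP j ∣ t := by
  obtain ⟨s, e, hs, rfl⟩ := S.reprP j p h
  have key : (S.W ^ t) ((S.W ^ s) (np e (S.BPp j))) = (S.W ^ s) (np e ((S.W ^ t) (S.BPp j))) := by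
    rw [← W_pow_add_apply, add_comm, W_pow_add_apply, S.W_pow_np]
  rw [key, ← S.pow_BPp_fix_iff j t]
  constructor
  · intro hE
    exact (np e).injective ((S.W ^ s).injective hE)
  · intro hE; rw [hE]

end Ctx
end S17

namespace S17
namespace Ctx

open Equiv

variable {n : ℕ} (S : Ctx n)

lemma np_np (e e' : Bool) (p : Fin n × Bool) : np e (np e' p) = np (xor e e') p := by
  rw [np_apply, np_apply, np_apply]
  refine point_eq rfl ?_
  cases e <;> cases e' <;> cases hp : p.2 <;> rfl

lemma pow_npBPp_mod (j : Fin S.B) (e : Bool) (t : ℕ) :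
    (S.W ^ t) (np e (S.BPp j)) = (S.W ^ (t % S.mP j)) (np e (S.BPp j)) := by
  rw [S.W_pow_np, S.W_pow_np, S.pow_BPp_mod]

lemma exN (g : ↥S.Cz) (i : Fin S.A) :
    ∃ i' t, S.mN i' = S.mN i ∧ t < 2 * S.mN i ∧ S.pi g (S.BPn i) = (S.W ^ t) (S.BPn i') := by
  set q := S.pi g (S.BPn i) with hq
  have hqn : ((q.1 : ℕ)) < n := q.1.isLt
  rcases S.cover hqn with ⟨i', hi'⟩ | ⟨j', hj'⟩
  · -- q in a negative block
    obtain ⟨t, ht, hrep⟩ := S.reprN i' q hi'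
    -- m equality by divisibility both ways
    have d1 : 2 * S.mN i ∣ 2 * S.mN i' := by
      have h1 : (S.W ^ (2 * S.mN i')) q = q := (S.fix_iff_N i' q hi' _).mpr dvd_rfl
      have h2 : S.pi g ((S.W ^ (2 * S.mN i')) (S.BPn i)) = S.pi g (S.BPn i) := by
        rw [S.pi_w_pow]; rw [← hq, h1]
      have h3 := S.pi_inj g h2
      exact (S.pow_BPn_fix_iff i _).mp h3
    have d2 : 2 * S.mN i' ∣ 2 * S.mN i := by
      have h1 : (S.W ^ (2 * S.mN i)) (S.BPn i) = S.BPn i := (S.pow_BPn_fix_iff i _).mpr dvd_rfl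
      have h2 : (S.W ^ (2 * S.mN i)) q = q := by
        rw [hq, ← S.pi_w_pow, h1]
      exact (S.fix_iff_N i' q hi' _).mp h2
    have hmm : S.mN i' = S.mN i := by
      have := Nat.dvd_antisymm d1 d2; omega
    exact ⟨i', t, hmm, by rw [← hmm]; exact ht, hrep⟩
  · -- q in a positive block : contradiction via sign
    exfalso
    have h1 : negPt n q = (S.W ^ (S.mP j')) (negPt n q) := by
      rw [S.W_pow_negPt]
      congr 1
      exact ((S.fix_iff_P j' q hj' _).mpr dvd_rfl).symm
    -- also negPt q = W^{mN i} q
    have h2 : negPt n q = (S.W ^ (S.mN i)) q := by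
      rw [hq, ← S.pi_negPt, ← S.pi_w_pow]
      congr 1
      exact (S.pow_m_N i (S.BPn i) (S.inN_base i)).symm
    have h3 : ((S.W ^ (S.mN i)) q).2 = q.2 := (S.w_pow_P_stab j' _ q hj').2
    rw [← h2] at h3
    have : (negPt n q).2 = !q.2 := rfl
    rw [this] at h3
    exact Bool.not_ne_self _ h3

lemma exP (g : ↥S.Cz) (j : Fin S.B) :
    ∃ j' u e, S.mP j' = S.mP j ∧ u < S.mP j ∧ S.pi g (S.BPp j) = (S.W ^ u) (np e (S.BPp j')) := by
  set q := S.pi g (S.BPp j) with hq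
  have hqn : ((q.1 : ℕ)) < n := q.1.isLt
  rcases S.cover hqn with ⟨i', hi'⟩ | ⟨j', hj'⟩
  · -- q in a negative block : contradiction via sign
    exfalso
    have h1 : negPt n q = (S.W ^ (S.mN i')) q := (S.pow_m_N i' q hi').symm
    have h2 : (S.W ^ (S.mN i')) q = S.pi g ((S.W ^ (S.mN i')) (S.BPp j)) := by
      rw [S.pi_w_pow, hq]
    have h3 : negPt n q = S.pi g (negPt n (S.BPp j)) := by rw [S.pi_negPt, hq]
    have h4 : S.pi g (negPt n (S.BPp j)) = S.pi g ((S.W ^ (S.mN i')) (S.BPp j)) := by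
      rw [← h3, h1, h2]
    have h5 := S.pi_inj g h4
    have h6 : ((S.W ^ (S.mN i')) (S.BPp j)).2 = false := (S.w_pow_P_stab j _ _ (S.inP_base j)).2
    rw [← h5] at h6
    exact Bool.noConfusion h6
  · obtain ⟨u, e, hu, hrep⟩ := S.reprP j' q hj'
    have d1 : S.mP j ∣ S.mP j' := by
      have h1 : (S.W ^ (S.mP j')) q = q := (S.fix_iff_P j' q hj' _).mpr dvd_rfl
      have h2 : S.pi g ((S.W ^ (S.mP j')) (S.BPp j)) = S.pi g (S.BPp j) := by
        rw [S.pi_w_pow]; rw [← hq, h1]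
      exact (S.pow_BPp_fix_iff j _).mp (S.pi_inj g h2)
    have d2 : S.mP j' ∣ S.mP j := by
      have h1 : (S.W ^ (S.mP j)) (S.BPp j) = S.BPp j := (S.pow_BPp_fix_iff j _).mpr dvd_rfl
      have h2 : (S.W ^ (S.mP j)) q = q := by rw [hq, ← S.pi_w_pow, h1]
      exact (S.fix_iff_P j' q hj' _).mp h2
    have hmm : S.mP j' = S.mP j := Nat.dvd_antisymm d2 d1
    exact ⟨j', u, e, hmm, by rw [← hmm]; exact hu, hrep⟩

-- uniqueness of the data
lemma uniqN {i' i'' : Fin S.A} {t t' : ℕ} (ht : t < 2 * S.mN i') (ht' : t' < 2 * S.mN i'')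
    (h : (S.W ^ t) (S.BPn i') = (S.W ^ t') (S.BPn i'')) : i' = i'' ∧ t = t' := by
  have m1 : S.inN i' (((S.W ^ t) (S.BPn i')).1 : ℕ) := S.w_pow_N_stab i' t _ (S.inN_base i')
  have m2 : S.inN i'' (((S.W ^ t') (S.BPn i'')).1 : ℕ) := S.w_pow_N_stab i'' t' _ (S.inN_base i'')
  rw [h] at m1
  have hii : i' = i'' := S.inN_inj m1 m2
  subst hii
  exact ⟨rfl, S.pow_BPn_inj i' ht ht' h⟩

lemma uniqP {j' j'' : Fin S.B} {u u' : ℕ} {e e' : Bool} (hu : u < S.mP j') (hu' : u' < S.mP j'')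
    (h : (S.W ^ u) (np e (S.BPp j')) = (S.W ^ u') (np e' (S.BPp j''))) :
    j' = j'' ∧ u = u' ∧ e = e' := by
  have hin : ∀ (jj : Fin S.B) (uu : ℕ) (ee : Bool),
      S.inP jj (((S.W ^ uu) (np ee (S.BPp jj))).1 : ℕ) ∧ ((S.W ^ uu) (np ee (S.BPp jj))).2 = ee := by
    intro jj uu ee
    have hb : S.inP jj ((np ee (S.BPp jj)).1 : ℕ) := by
      rw [np_apply]; exact S.inP_base jj
    obtain ⟨a, b⟩ := S.w_pow_P_stab jj uu _ hb
    refine ⟨a, ?_⟩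
    rw [b, np_apply, BPp_snd, Bool.xor_false]
  obtain ⟨a1, b1⟩ := hin j' u e
  obtain ⟨a2, b2⟩ := hin j'' u' e'
  rw [h] at a1 b1
  have hjj : j' = j'' := S.inP_inj a1 a2
  subst hjj
  have hee : e = e' := by rw [← b1, b2]
  subst hee
  refine ⟨rfl, ?_, rfl⟩
  rw [S.W_pow_np, S.W_pow_np] at h
  exact S.pow_BPp_inj j' hu hu' ((np e).injective h)

noncomputable def sN (g : ↥S.Cz) (i : Fin S.A) : Fin S.A := (S.exN g i).choose
noncomputable def tN (g : ↥S.Cz) (i : Fin S.A) : ℕ := (S.exN g i).choose_spec.choose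

lemma dataN (g : ↥S.Cz) (i : Fin S.A) :
    S.mN (S.sN g i) = S.mN i ∧ S.tN g i < 2 * S.mN i ∧
      S.pi g (S.BPn i) = (S.W ^ (S.tN g i)) (S.BPn (S.sN g i)) :=
  (S.exN g i).choose_spec.choose_spec

lemma dataN_unique (g : ↥S.Cz) (i i' : Fin S.A) (t : ℕ) (ht : t < 2 * S.mN i')
    (h : S.pi g (S.BPn i) = (S.W ^ t) (S.BPn i')) : S.sN g i = i' ∧ S.tN g i = t := by
  obtain ⟨hm, htb, he⟩ := S.dataN g i
  have := S.uniqN (by rw [hm]; exact htb) ht (he.symm.trans h)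
  exact this

noncomputable def sP (g : ↥S.Cz) (j : Fin S.B) : Fin S.B := (S.exP g j).choose
noncomputable def uP (g : ↥S.Cz) (j : Fin S.B) : ℕ := (S.exP g j).choose_spec.choose
noncomputable def eP (g : ↥S.Cz) (j : Fin S.B) : Bool :=
  (S.exP g j).choose_spec.choose_spec.choose

lemma dataP (g : ↥S.Cz) (j : Fin S.B) :
    S.mP (S.sP g j) = S.mP j ∧ S.uP g j < S.mP j ∧
      S.pi g (S.BPp j) = (S.W ^ (S.uP g j)) (np (S.eP g j) (S.BPp (S.sP g j))) :=
  (S.exP g j).choose_spec.choose_spec.choose_spec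

lemma dataP_unique (g : ↥S.Cz) (j j' : Fin S.B) (u : ℕ) (e : Bool) (hu : u < S.mP j')
    (h : S.pi g (S.BPp j) = (S.W ^ u) (np e (S.BPp j'))) :
    S.sP g j = j' ∧ S.uP g j = u ∧ S.eP g j = e := by
  obtain ⟨hm, hub, he⟩ := S.dataP g j
  exact S.uniqP (by rw [hm]; exact hub) hu (he.symm.trans h)

-- composition laws
lemma dataN_one (i : Fin S.A) : S.sN 1 i = i ∧ S.tN 1 i = 0 :=
  S.dataN_unique 1 i i 0 (by have := S.mN_pos i; omega) (by rw [S.pi_one]; rfl)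

lemma dataP_one (j : Fin S.B) : S.sP 1 j = j ∧ S.uP 1 j = 0 ∧ S.eP 1 j = false :=
  S.dataP_unique 1 j j 0 false (S.mP_pos j) (by rw [S.pi_one]; rfl)

lemma dataN_mul (g h : ↥S.Cz) (i : Fin S.A) :
    S.sN (g * h) i = S.sN g (S.sN h i) ∧
      S.tN (g * h) i = (S.tN h i + S.tN g (S.sN h i)) % (2 * S.mN i) := by
  obtain ⟨hm1, ht1, he1⟩ := S.dataN h i
  obtain ⟨hm2, ht2, he2⟩ := S.dataN g (S.sN h i)
  have key : S.pi (g * h) (S.BPn i) =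
      (S.W ^ (S.tN h i + S.tN g (S.sN h i))) (S.BPn (S.sN g (S.sN h i))) := by
    rw [S.pi_mul, he1, S.pi_w_pow, he2, ← W_pow_add_apply, add_comm]
  have key2 : S.pi (g * h) (S.BPn i) =
      (S.W ^ ((S.tN h i + S.tN g (S.sN h i)) % (2 * S.mN (S.sN g (S.sN h i)))))
        (S.BPn (S.sN g (S.sN h i))) := by
    rw [key, ← S.pow_BPn_mod]
  have hmW : S.mN (S.sN g (S.sN h i)) = S.mN i := by rw [hm2, hm1]
  rw [hmW] at key2
  exact S.dataN_unique (g * h) i _ _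
    (by rw [hmW]; exact Nat.mod_lt _ (by have := S.mN_pos i; omega)) key2

lemma dataP_mul (g h : ↥S.Cz) (j : Fin S.B) :
    S.sP (g * h) j = S.sP g (S.sP h j) ∧
      S.uP (g * h) j = (S.uP h j + S.uP g (S.sP h j)) % S.mP j ∧
      S.eP (g * h) j = xor (S.eP h j) (S.eP g (S.sP h j)) := by
  obtain ⟨hm1, hu1, he1⟩ := S.dataP h j
  obtain ⟨hm2, hu2, he2⟩ := S.dataP g (S.sP h j)
  have key : S.pi (g * h) (S.BPp j) =
      (S.W ^ (S.uP h j + S.uP g (S.sP h j)))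
        (np (xor (S.eP h j) (S.eP g (S.sP h j))) (S.BPp (S.sP g (S.sP h j)))) := by
    rw [S.pi_mul, he1, S.pi_w_pow, S.pi_np, he2, ← S.W_pow_np, ← W_pow_add_apply, np_np]
  have hmW : S.mP (S.sP g (S.sP h j)) = S.mP j := by rw [hm2, hm1]
  have key2 : S.pi (g * h) (S.BPp j) =
      (S.W ^ ((S.uP h j + S.uP g (S.sP h j)) % S.mP j))
        (np (xor (S.eP h j) (S.eP g (S.sP h j))) (S.BPp (S.sP g (S.sP h j)))) := by
    rw [key, S.pow_npBPp_mod, hmW]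
  exact S.dataP_unique (g * h) j _ _ _
    (by rw [hmW]; exact Nat.mod_lt _ (S.mP_pos j)) key2

lemma mN_sN (g : ↥S.Cz) (i : Fin S.A) : S.mN (S.sN g i) = S.mN i := (S.dataN g i).1
lemma mP_sP (g : ↥S.Cz) (j : Fin S.B) : S.mP (S.sP g j) = S.mP j := (S.dataP g j).1

noncomputable def sigmaN (g : ↥S.Cz) : Equiv.Perm (Fin S.A) :=
  Equiv.ofBijective (S.sN g) (by
    rw [← Finite.injective_iff_bijective]
    intro i i' h
    have h1 := (S.dataN_mul g⁻¹ g i).1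
    have h2 := (S.dataN_mul g⁻¹ g i').1
    rw [inv_mul_cancel, (S.dataN_one i).1] at h1
    rw [inv_mul_cancel, (S.dataN_one i').1] at h2
    rw [h1, h2, h])

noncomputable def sigmaP (g : ↥S.Cz) : Equiv.Perm (Fin S.B) :=
  Equiv.ofBijective (S.sP g) (by
    rw [← Finite.injective_iff_bijective]
    intro j j' h
    have h1 := (S.dataP_mul g⁻¹ g j).1
    have h2 := (S.dataP_mul g⁻¹ g j').1
    rw [inv_mul_cancel, (S.dataP_one j).1] at h1
    rw [inv_mul_cancel, (S.dataP_one j').1] at h2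
    rw [h1, h2, h])

@[simp] lemma sigmaN_apply (g : ↥S.Cz) (i : Fin S.A) : S.sigmaN g i = S.sN g i := rfl
@[simp] lemma sigmaP_apply (g : ↥S.Cz) (j : Fin S.B) : S.sigmaP g j = S.sP g j := rfl

lemma sigmaN_mul (g h : ↥S.Cz) : S.sigmaN (g * h) = S.sigmaN g * S.sigmaN h :=
  Equiv.ext fun i => (S.dataN_mul g h i).1

lemma sigmaP_mul (g h : ↥S.Cz) : S.sigmaP (g * h) = S.sigmaP g * S.sigmaP h :=
  Equiv.ext fun j => (S.dataP_mul g h j).1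

end Ctx
end S17

namespace S17

open Equiv

noncomputable def zu (k : ℕ) : ℂˣ := Units.mk0 (zeta k) (Complex.exp_ne_zero _)

@[simp] lemma zu_coe (k : ℕ) : ((zu k : ℂˣ) : ℂ) = zeta k := rfl

lemma zeta_pow_self (k : ℕ) (hk : 0 < k) : zeta k ^ k = 1 := by
  rw [zeta, ← Complex.exp_nat_mul]
  have : (k : ℂ) * (2 * Real.pi * Complex.I / (k : ℂ)) = 2 * Real.pi * Complex.I := by
    have : (k : ℂ) ≠ 0 := Nat.cast_ne_zero.mpr (by omega)
    field_simp
  rw [this]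
  simpa using Complex.exp_int_mul_two_pi_mul_I 1

lemma zu_pow_self (k : ℕ) (hk : 0 < k) : zu k ^ k = 1 :=
  Units.ext (by simpa using zeta_pow_self k hk)

lemma pow_mod_of_pow_eq_one (ω : ℂˣ) (k : ℕ) (h : ω ^ k = 1) (x : ℕ) :
    ω ^ (x % k) = ω ^ x := by
  conv_rhs => rw [show x = k * (x / k) + x % k from (Nat.div_add_mod x k).symm]
  rw [pow_add, pow_mul, h, one_pow, one_mul]

noncomputable def intUnit : ℤˣ →* ℂˣ := Units.map (Int.castRingHom ℂ).toMonoidHom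

namespace Ctx

variable {n : ℕ} (S : Ctx n)

noncomputable def zuN (i : Fin S.A) : ℂˣ := zu (2 * S.mN i) ^ (2 ^ ((S.mN i).factorization 2))

lemma zuN_pow_order (i : Fin S.A) : S.zuN i ^ (2 * S.mN i) = 1 := by
  rw [zuN, ← pow_mul, mul_comm (2 ^ _) _, pow_mul, zu_pow_self _ (by have := S.mN_pos i; omega),
    one_pow]

noncomputable def kapP (j : Fin S.B) : ℂˣ := (-1) ^ (S.mP j - 1)

lemma kapP_sq (j : Fin S.B) : S.kapP j * S.kapP j = 1 := by
  rw [kapP, ← pow_add, ← two_mul]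
  exact Even.neg_one_pow ⟨S.mP j - 1, by ring⟩

noncomputable def phiFun (g : ↥S.Cz) : ℂˣ :=
  intUnit (Equiv.Perm.sign (S.sigmaN g)) *
    (∏ i, S.zuN i ^ S.tN g i) *
    (∏ j, zu (S.mP j) ^ S.uP g j) *
    (∏ j, if S.eP g j then S.kapP j else 1)

lemma zuN_sN (g : ↥S.Cz) (i : Fin S.A) : S.zuN (S.sN g i) = S.zuN i := by
  rw [zuN, zuN, S.mN_sN g i]

lemma kapP_sP (g : ↥S.Cz) (j : Fin S.B) : S.kapP (S.sP g j) = S.kapP j := by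
  rw [kapP, kapP, S.mP_sP g j]

lemma zuP_pow_order (j : Fin S.B) : zu (S.mP j) ^ (S.mP j) = 1 :=
  zu_pow_self _ (S.mP_pos j)

lemma phiFun_mul (g h : ↥S.Cz) : S.phiFun (g * h) = S.phiFun g * S.phiFun h := by
  have e1 : intUnit (Equiv.Perm.sign (S.sigmaN (g * h))) =
      intUnit (Equiv.Perm.sign (S.sigmaN g)) * intUnit (Equiv.Perm.sign (S.sigmaN h)) := by
    rw [S.sigmaN_mul, map_mul, map_mul]
  have e2 : (∏ i, S.zuN i ^ S.tN (g * h) i) =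
      (∏ i, S.zuN i ^ S.tN g i) * (∏ i, S.zuN i ^ S.tN h i) := by
    have step : ∀ i : Fin S.A, S.zuN i ^ S.tN (g * h) i =
        S.zuN i ^ S.tN h i * S.zuN i ^ S.tN g (S.sN h i) := by
      intro i
      rw [(S.dataN_mul g h i).2, pow_mod_of_pow_eq_one _ _ (S.zuN_pow_order i), pow_add]
    rw [Finset.prod_congr rfl (fun i _ => step i), Finset.prod_mul_distrib]
    have reidx : (∏ i, S.zuN i ^ S.tN g (S.sN h i)) = ∏ i, S.zuN i ^ S.tN g i := by
      calc (∏ i, S.zuN i ^ S.tN g (S.sN h i))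
          = ∏ i, S.zuN (S.sigmaN h i) ^ S.tN g (S.sigmaN h i) := by
            refine Finset.prod_congr rfl fun i _ => ?_
            rw [sigmaN_apply, S.zuN_sN]
        _ = ∏ i, S.zuN i ^ S.tN g i :=
            Equiv.prod_comp (S.sigmaN h) (fun i' => S.zuN i' ^ S.tN g i')
    rw [reidx, mul_comm]
  have e3 : (∏ j, zu (S.mP j) ^ S.uP (g * h) j) =
      (∏ j, zu (S.mP j) ^ S.uP g j) * (∏ j, zu (S.mP j) ^ S.uP h j) := by
    have step : ∀ j : Fin S.B, zu (S.mP j) ^ S.uP (g * h) j =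
        zu (S.mP j) ^ S.uP h j * zu (S.mP j) ^ S.uP g (S.sP h j) := by
      intro j
      rw [(S.dataP_mul g h j).2.1, pow_mod_of_pow_eq_one _ _ (S.zuP_pow_order j), pow_add]
    rw [Finset.prod_congr rfl (fun j _ => step j), Finset.prod_mul_distrib]
    have reidx : (∏ j, zu (S.mP j) ^ S.uP g (S.sP h j)) = ∏ j, zu (S.mP j) ^ S.uP g j := by
      calc (∏ j, zu (S.mP j) ^ S.uP g (S.sP h j))
          = ∏ j, zu (S.mP (S.sigmaP h j)) ^ S.uP g (S.sigmaP h j) := by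
            refine Finset.prod_congr rfl fun j _ => ?_
            rw [sigmaP_apply, S.mP_sP]
        _ = ∏ j, zu (S.mP j) ^ S.uP g j :=
            Equiv.prod_comp (S.sigmaP h) (fun j' => zu (S.mP j') ^ S.uP g j')
    rw [reidx, mul_comm]
  have e4 : (∏ j, if S.eP (g * h) j then S.kapP j else 1) =
      (∏ j, if S.eP g j then S.kapP j else 1) * (∏ j, if S.eP h j then S.kapP j else 1) := by
    have step : ∀ j : Fin S.B, (if S.eP (g * h) j then S.kapP j else 1) =
        (if S.eP h j then S.kapP j else 1) * (if S.eP g (S.sP h j) then S.kapP j else 1) := by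
      intro j
      rw [(S.dataP_mul g h j).2.2]
      cases ha : S.eP h j <;> cases hb : S.eP g (S.sP h j) <;>
        simp [ha, hb, (S.kapP_sq j).symm]
    rw [Finset.prod_congr rfl (fun j _ => step j), Finset.prod_mul_distrib]
    have reidx : (∏ j, if S.eP g (S.sP h j) then S.kapP j else 1) =
        ∏ j, if S.eP g j then S.kapP j else 1 := by
      calc (∏ j, if S.eP g (S.sP h j) then S.kapP j else 1)
          = ∏ j, (if S.eP g (S.sigmaP h j) then S.kapP (S.sigmaP h j) else 1) := by
            refine Finset.prod_congr rfl fun j _ => ?_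
            rw [sigmaP_apply, S.kapP_sP]
        _ = ∏ j, if S.eP g j then S.kapP j else 1 :=
            Equiv.prod_comp (S.sigmaP h) (fun j' => if S.eP g j' then S.kapP j' else 1)
    rw [reidx, mul_comm]
  rw [phiFun, phiFun, phiFun, e1, e2, e3, e4]
  group
  try ac_rfl

noncomputable def phi : ↥S.Cz →* ℂˣ := MonoidHom.mk' S.phiFun S.phiFun_mul

end Ctx
end S17

namespace S17
namespace Ctx

open Equiv

variable {n : ℕ} (S : Ctx n)

noncomputable def gc (i : Fin S.A) : ↥S.Cz := ⟨S.c i, S.hcC i⟩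
noncomputable def gd (j : Fin S.B) : ↥S.Cz := ⟨S.d j, S.hdC j⟩
noncomputable def gx (i : Fin S.A) : ↥S.Cz := ⟨S.x i, S.hxC i⟩
noncomputable def gy (j : Fin S.B) : ↥S.Cz := ⟨S.y j, S.hyC j⟩
noncomputable def gr (j : Fin S.B) : ↥S.Cz := ⟨S.r j, S.hrC j⟩

lemma pi_gc (i : Fin S.A) : S.pi (S.gc i) = S.cP i := rfl
lemma pi_gd (j : Fin S.B) : S.pi (S.gd j) = S.dP j := rfl
lemma pi_gx (i : Fin S.A) : S.pi (S.gx i) = S.xP i := rfl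
lemma pi_gy (j : Fin S.B) : S.pi (S.gy j) = S.yP j := rfl
lemma pi_gr (j : Fin S.B) : S.pi (S.gr j) = S.rP j := rfl

lemma not_inN_ge {i : Fin S.A} {v : ℕ} (h : S.μ.neg.sum ≤ v) : ¬ S.inN i v :=
  fun h' => absurd (S.inN_lt i h') (not_lt.mpr h)

lemma not_inP_lt {j : Fin S.B} {v : ℕ} (h : v < S.μ.neg.sum) : ¬ S.inP j v :=
  fun h' => absurd (S.inP_ge j h') (not_le.mpr h)

-- c data
lemma data_c_self (i : Fin S.A) : S.sN (S.gc i) i = i ∧ S.tN (S.gc i) i = 1 := by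
  refine S.dataN_unique _ i i 1 (by have := S.mN_pos i; omega) ?_
  rw [pi_gc, pow_one]
  exact (S.w_on_N i _ (S.inN_base i)).symm

lemma data_c_other (i i'' : Fin S.A) (hne : i ≠ i'') :
    S.sN (S.gc i) i'' = i'' ∧ S.tN (S.gc i) i'' = 0 := by
  refine S.dataN_unique _ i'' i'' 0 (by have := S.mN_pos i''; omega) ?_
  rw [pi_gc, pow_zero]
  exact S.c_fix i _ (S.inN_not (Ne.symm hne) (S.inN_base i''))

lemma dataP_c (i : Fin S.A) (j : Fin S.B) :
    S.sP (S.gc i) j = j ∧ S.uP (S.gc i) j = 0 ∧ S.eP (S.gc i) j = false := by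
  refine S.dataP_unique _ j j 0 false (S.mP_pos j) ?_
  rw [pi_gc, pow_zero]
  exact S.c_fix i _ (S.not_inN_ge (S.sum_le_bP j))

-- d data
lemma dataN_d (j : Fin S.B) (i : Fin S.A) :
    S.sN (S.gd j) i = i ∧ S.tN (S.gd j) i = 0 := by
  refine S.dataN_unique _ i i 0 (by have := S.mN_pos i; omega) ?_
  rw [pi_gd, pow_zero]
  exact S.d_fix j _ (S.not_inP_lt (S.inN_lt i (S.inN_base i)))

lemma data_d_self (j : Fin S.B) :
    S.sP (S.gd j) j = j ∧ S.uP (S.gd j) j = 1 % S.mP j ∧ S.eP (S.gd j) j = false := by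
  refine S.dataP_unique _ j j (1 % S.mP j) false (Nat.mod_lt _ (S.mP_pos j)) ?_
  rw [pi_gd]
  have h1 : np false (S.BPp j) = S.BPp j := rfl
  rw [h1, ← S.pow_BPp_mod j 1, pow_one]
  exact (S.w_on_P j _ (S.inP_base j)).symm

lemma data_d_other (j j'' : Fin S.B) (hne : j ≠ j'') :
    S.sP (S.gd j) j'' = j'' ∧ S.uP (S.gd j) j'' = 0 ∧ S.eP (S.gd j) j'' = false := by
  refine S.dataP_unique _ j'' j'' 0 false (S.mP_pos j'') ?_
  rw [pi_gd, pow_zero]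
  exact S.d_fix j _ (S.inP_not (Ne.symm hne) (S.inP_base j''))

-- r data
lemma dataN_r (j : Fin S.B) (i : Fin S.A) :
    S.sN (S.gr j) i = i ∧ S.tN (S.gr j) i = 0 := by
  refine S.dataN_unique _ i i 0 (by have := S.mN_pos i; omega) ?_
  rw [pi_gr, pow_zero]
  exact S.r_fix j _ (S.not_inP_lt (S.inN_lt i (S.inN_base i)))

lemma data_r_self (j : Fin S.B) :
    S.sP (S.gr j) j = j ∧ S.uP (S.gr j) j = 0 ∧ S.eP (S.gr j) j = true := by
  refine S.dataP_unique _ j j 0 true (S.mP_pos j) ?_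
  rw [pi_gr]
  have hz : (S.W ^ 0) (np true (S.BPp j)) = np true (S.BPp j) := rfl
  rw [hz, np_apply]
  obtain ⟨h1, h2⟩ := S.hr' j (S.BPp j)
  rw [if_pos ⟨le_rfl, by have := S.mP_pos j; simpa using this⟩] at h2
  refine point_eq ?_ ?_
  · exact congrArg Fin.val h1
  · rw [h2]; rfl

lemma data_r_other (j j'' : Fin S.B) (hne : j ≠ j'') :
    S.sP (S.gr j) j'' = j'' ∧ S.uP (S.gr j) j'' = 0 ∧ S.eP (S.gr j) j'' = false := by
  refine S.dataP_unique _ j'' j'' 0 false (S.mP_pos j'') ?_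
  rw [pi_gr, pow_zero]
  exact S.r_fix j _ (S.inP_not (Ne.symm hne) (S.inP_base j''))

-- x data (under equal adjacent parts)
lemma x_bases (i : Fin S.A) (hi : (i : ℕ) + 1 < S.A) (heq : S.mN i = S.mN ⟨(i : ℕ) + 1, hi⟩) :
    S.xP i (S.BPn i) = S.BPn ⟨(i : ℕ) + 1, hi⟩ ∧
    S.xP i (S.BPn ⟨(i : ℕ) + 1, hi⟩) = S.BPn i ∧
    (∀ i'' : Fin S.A, i'' ≠ i → i'' ≠ ⟨(i : ℕ) + 1, hi⟩ → S.xP i (S.BPn i'') = S.BPn i'') ∧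
    (∀ j : Fin S.B, S.xP i (S.BPp j) = S.BPp j) := by
  have hm := S.mN_pos i
  have hsucc : S.bN ((i : ℕ) + 1) = S.bN i + S.mN i := S.bN_succ i
  have hv : ((⟨(i : ℕ) + 1, hi⟩ : Fin S.A) : ℕ) = (i : ℕ) + 1 := rfl
  have hsucc2 : S.bN ((i : ℕ) + 1 + 1) = S.bN i + 2 * S.mN i := by
    have h2 := S.bN_succ ⟨(i : ℕ) + 1, hi⟩
    have hmm : S.mN ⟨(i : ℕ) + 1, hi⟩ = S.mN i := heq.symm
    simp only [hv, hmm] at h2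
    omega
  refine ⟨?_, ?_, ?_, ?_⟩
  · obtain ⟨h1, h2⟩ := S.hx' i hi heq (S.BPn i)
    rw [if_pos (by constructor <;> [exact le_rfl; simpa using hm])] at h1
    exact point_eq (by rw [h1]; exact hsucc.symm) h2
  · obtain ⟨h1, h2⟩ := S.hx' i hi heq (S.BPn ⟨(i : ℕ) + 1, hi⟩)
    have hb : ((S.BPn ⟨(i : ℕ) + 1, hi⟩).1 : ℕ) = S.bN i + S.mN i := by
      rw [BPn_fst]; exact hsucc
    rw [hb] at h1
    rw [if_neg (by omega), if_pos (by omega)] at h1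
    exact point_eq (by rw [h1, BPn_fst]; omega) h2
  · intro i'' hne1 hne2
    apply S.x_fix i hi heq
    rw [BPn_fst]
    intro ⟨ha, hb⟩
    rcases Fin.lt_or_lt_of_ne hne1 with hlt | hgt
    · have : S.bN ((i'' : ℕ) + 1) ≤ S.bN i := S.bN_mono hlt
      have h3 := S.bN_succ i''
      have := S.mN_pos i''
      omega
    · have hge2 : (i : ℕ) + 1 + 1 ≤ (i'' : ℕ) := by
        rcases Nat.lt_or_ge (i'' : ℕ) ((i : ℕ) + 2) with hc | hc
        · exfalso
          have hv2 : (i'' : ℕ) = (i : ℕ) + 1 := by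
            have := hgt
            simp only [Fin.lt_def, hv] at this
            omega
          exact hne2 (Fin.ext (by rw [hv2, hv]))
        · omega
      have : S.bN ((i : ℕ) + 1 + 1) ≤ S.bN i'' := S.bN_mono hge2
      omega
  · intro j
    apply S.x_fix i hi heq
    rw [BPp_fst]
    intro ⟨ha, hb⟩
    have h1 : S.bN ((i : ℕ) + 1 + 1) ≤ S.μ.neg.sum := S.bN_le_sum _
    have h2 := S.sum_le_bP j
    omega

lemma data_x (i : Fin S.A) (hi : (i : ℕ) + 1 < S.A) (heq : S.mN i = S.mN ⟨(i : ℕ) + 1, hi⟩) :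
    (S.sN (S.gx i) i = ⟨(i : ℕ) + 1, hi⟩ ∧ S.tN (S.gx i) i = 0) ∧
    (S.sN (S.gx i) ⟨(i : ℕ) + 1, hi⟩ = i ∧ S.tN (S.gx i) ⟨(i : ℕ) + 1, hi⟩ = 0) ∧
    (∀ i'' : Fin S.A, i'' ≠ i → i'' ≠ ⟨(i : ℕ) + 1, hi⟩ →
      S.sN (S.gx i) i'' = i'' ∧ S.tN (S.gx i) i'' = 0) ∧
    (∀ j : Fin S.B, S.sP (S.gx i) j = j ∧ S.uP (S.gx i) j = 0 ∧ S.eP (S.gx i) j = false) := by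
  obtain ⟨e1, e2, e3, e4⟩ := S.x_bases i hi heq
  refine ⟨?_, ?_, fun i'' h1 h2 => ?_, fun j => ?_⟩
  · exact S.dataN_unique _ i _ 0 (by have := S.mN_pos ⟨(i : ℕ) + 1, hi⟩; omega)
      (by rw [pi_gx, pow_zero]; exact e1)
  · exact S.dataN_unique _ _ i 0 (by have := S.mN_pos i; omega)
      (by rw [pi_gx, pow_zero]; exact e2)
  · exact S.dataN_unique _ i'' i'' 0 (by have := S.mN_pos i''; omega)
      (by rw [pi_gx, pow_zero]; exact e3 i'' h1 h2)
  · exact S.dataP_unique _ j j 0 false (S.mP_pos j)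
      (by rw [pi_gx, pow_zero]; exact e4 j)

-- y data (under equal adjacent parts)
lemma y_bases (j : Fin S.B) (hj : (j : ℕ) + 1 < S.B) (heq : S.mP j = S.mP ⟨(j : ℕ) + 1, hj⟩) :
    S.yP j (S.BPp j) = S.BPp ⟨(j : ℕ) + 1, hj⟩ ∧
    S.yP j (S.BPp ⟨(j : ℕ) + 1, hj⟩) = S.BPp j ∧
    (∀ j'' : Fin S.B, j'' ≠ j → j'' ≠ ⟨(j : ℕ) + 1, hj⟩ → S.yP j (S.BPp j'') = S.BPp j'') ∧
    (∀ i : Fin S.A, S.yP j (S.BPn i) = S.BPn i) := by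
  have hm := S.mP_pos j
  have hsucc : S.bP ((j : ℕ) + 1) = S.bP j + S.mP j := S.bP_succ j
  have hv : ((⟨(j : ℕ) + 1, hj⟩ : Fin S.B) : ℕ) = (j : ℕ) + 1 := rfl
  have hsucc2 : S.bP ((j : ℕ) + 1 + 1) = S.bP j + 2 * S.mP j := by
    have h2 := S.bP_succ ⟨(j : ℕ) + 1, hj⟩
    have hmm : S.mP ⟨(j : ℕ) + 1, hj⟩ = S.mP j := heq.symm
    simp only [hv, hmm] at h2
    omega
  refine ⟨?_, ?_, ?_, ?_⟩
  · obtain ⟨h1, h2⟩ := S.hy' j hj heq (S.BPp j)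
    rw [if_pos (by constructor <;> [exact le_rfl; simpa using hm])] at h1
    exact point_eq (by rw [h1]; exact hsucc.symm) h2
  · obtain ⟨h1, h2⟩ := S.hy' j hj heq (S.BPp ⟨(j : ℕ) + 1, hj⟩)
    have hb : ((S.BPp ⟨(j : ℕ) + 1, hj⟩).1 : ℕ) = S.bP j + S.mP j := by
      rw [BPp_fst]; exact hsucc
    rw [hb] at h1
    rw [if_neg (by omega), if_pos (by omega)] at h1
    exact point_eq (by rw [h1, BPp_fst]; omega) h2
  · intro j'' hne1 hne2
    apply S.y_fix j hj heq
    rw [BPp_fst]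
    intro ⟨ha, hb⟩
    rcases Fin.lt_or_lt_of_ne hne1 with hlt | hgt
    · have : S.bP ((j'' : ℕ) + 1) ≤ S.bP j := S.bP_mono hlt
      have h3 := S.bP_succ j''
      have := S.mP_pos j''
      omega
    · have hge2 : (j : ℕ) + 1 + 1 ≤ (j'' : ℕ) := by
        rcases Nat.lt_or_ge (j'' : ℕ) ((j : ℕ) + 2) with hc | hc
        · exfalso
          have hv2 : (j'' : ℕ) = (j : ℕ) + 1 := by
            have := hgt
            simp only [Fin.lt_def, hv] at this
            omega
          exact hne2 (Fin.ext (by rw [hv2, hv]))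
        · omega
      have : S.bP ((j : ℕ) + 1 + 1) ≤ S.bP j'' := S.bP_mono hge2
      omega
  · intro i
    apply S.y_fix j hj heq
    rw [BPn_fst]
    intro ⟨ha, hb⟩
    have h1 := S.inN_lt i (S.inN_base i)
    have h2 := S.sum_le_bP j
    omega

lemma data_y (j : Fin S.B) (hj : (j : ℕ) + 1 < S.B) (heq : S.mP j = S.mP ⟨(j : ℕ) + 1, hj⟩) :
    (S.sP (S.gy j) j = ⟨(j : ℕ) + 1, hj⟩ ∧ S.uP (S.gy j) j = 0 ∧ S.eP (S.gy j) j = false) ∧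
    (S.sP (S.gy j) ⟨(j : ℕ) + 1, hj⟩ = j ∧ S.uP (S.gy j) ⟨(j : ℕ) + 1, hj⟩ = 0 ∧
      S.eP (S.gy j) ⟨(j : ℕ) + 1, hj⟩ = false) ∧
    (∀ j'' : Fin S.B, j'' ≠ j → j'' ≠ ⟨(j : ℕ) + 1, hj⟩ →
      S.sP (S.gy j) j'' = j'' ∧ S.uP (S.gy j) j'' = 0 ∧ S.eP (S.gy j) j'' = false) ∧
    (∀ i : Fin S.A, S.sN (S.gy j) i = i ∧ S.tN (S.gy j) i = 0) := by
  obtain ⟨e1, e2, e3, e4⟩ := S.y_bases j hj heq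
  refine ⟨?_, ?_, fun j'' h1 h2 => ?_, fun i => ?_⟩
  · exact S.dataP_unique _ j _ 0 false (S.mP_pos ⟨(j : ℕ) + 1, hj⟩)
      (by rw [pi_gy, pow_zero]; exact e1)
  · exact S.dataP_unique _ _ j 0 false (S.mP_pos j)
      (by rw [pi_gy, pow_zero]; exact e2)
  · exact S.dataP_unique _ j'' j'' 0 false (S.mP_pos j'')
      (by rw [pi_gy, pow_zero]; exact e3 j'' h1 h2)
  · exact S.dataN_unique _ i i 0 (by have := S.mN_pos i; omega)
      (by rw [pi_gy, pow_zero]; exact e4 i)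

end Ctx
end S17

namespace S17

open Equiv

lemma intUnit_neg_one : intUnit (-1) = -1 := by
  ext
  simp [intUnit]

lemma factorization_two (l k : ℕ) (hk : Odd k) : (2 ^ l * k).factorization 2 = l := by
  have hk0 : k ≠ 0 := by rintro rfl; simp at hk
  rw [Nat.factorization_mul (by positivity) hk0]
  have h1 : (2 ^ l : ℕ).factorization = Finsupp.single 2 l := Nat.Prime.factorization_pow Nat.prime_two
  have h2 : k.factorization 2 = 0 := by
    apply Nat.factorization_eq_zero_of_not_dvd
    rw [Nat.two_dvd_ne_zero]
    exact Nat.odd_iff.mp hk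
  simp [h1, h2]

lemma zeta_pow_two_pow (l k : ℕ) (hk : Odd k) :
    zeta (2 * (2 ^ l * k)) ^ (2 ^ l) = zeta (2 * k) := by
  have hk0 : k ≠ 0 := by rintro rfl; simp at hk
  rw [zeta, zeta, ← Complex.exp_nat_mul]
  congr 1
  have e1 : ((2 * (2 ^ l * k) : ℕ) : ℂ) = (2 ^ l : ℂ) * ((2 * k : ℕ) : ℂ) := by
    push_cast; ring
  rw [e1]
  have h2 : ((2 * k : ℕ) : ℂ) ≠ 0 := by
    simp; omega
  have h3 : (2 ^ l : ℂ) ≠ 0 := by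
    apply pow_ne_zero; norm_num
  push_cast
  rw [mul_div_assoc', mul_div_mul_left _ _ h3]

namespace Ctx

variable {n : ℕ} (S : Ctx n)

lemma phi_apply (g : ↥S.Cz) : S.phi g = S.phiFun g := rfl

lemma phi_c (i0 : Fin S.A) : S.phi (S.gc i0) = S.zuN i0 := by
  have hsig : S.sigmaN (S.gc i0) = 1 := by
    apply Equiv.ext
    intro i
    rcases eq_or_ne i i0 with rfl | hne
    · exact (S.data_c_self i).1
    · exact (S.data_c_other i0 i (Ne.symm hne)).1
  have hN : (∏ i, S.zuN i ^ S.tN (S.gc i0) i) = S.zuN i0 := by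
    rw [Finset.prod_eq_single i0
      (fun i _ hne => by rw [(S.data_c_other i0 i (Ne.symm hne)).2, pow_zero])
      (fun h => absurd (Finset.mem_univ _) h)]
    rw [(S.data_c_self i0).2, pow_one]
  have hP1 : (∏ j, zu (S.mP j) ^ S.uP (S.gc i0) j) = 1 :=
    Finset.prod_eq_one fun j _ => by rw [(S.dataP_c i0 j).2.1, pow_zero]
  have hP2 : (∏ j, if S.eP (S.gc i0) j then S.kapP j else 1) = 1 :=
    Finset.prod_eq_one fun j _ => by rw [(S.dataP_c i0 j).2.2]; rfl
  rw [phi_apply, phiFun, hsig, map_one, map_one, hN, hP1, hP2, one_mul, mul_one, mul_one]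

lemma phi_d (j0 : Fin S.B) : S.phi (S.gd j0) = zu (S.mP j0) := by
  have hsig : S.sigmaN (S.gd j0) = 1 := Equiv.ext fun i => (S.dataN_d j0 i).1
  have hN : (∏ i, S.zuN i ^ S.tN (S.gd j0) i) = 1 :=
    Finset.prod_eq_one fun i _ => by rw [(S.dataN_d j0 i).2, pow_zero]
  have hP1 : (∏ j, zu (S.mP j) ^ S.uP (S.gd j0) j) = zu (S.mP j0) := by
    rw [Finset.prod_eq_single j0
      (fun j _ hne => by rw [(S.data_d_other j0 j (Ne.symm hne)).2.1, pow_zero])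
      (fun h => absurd (Finset.mem_univ _) h)]
    rw [(S.data_d_self j0).2.1, pow_mod_of_pow_eq_one _ _ (S.zuP_pow_order j0), pow_one]
  have hP2 : (∏ j, if S.eP (S.gd j0) j then S.kapP j else 1) = 1 := by
    apply Finset.prod_eq_one
    intro j _
    rcases eq_or_ne j j0 with rfl | hne
    · rw [(S.data_d_self j).2.2]; rfl
    · rw [(S.data_d_other j0 j (Ne.symm hne)).2.2]; rfl
  rw [phi_apply, phiFun, hsig, map_one, map_one, hN, hP1, hP2, one_mul, one_mul, mul_one]

lemma phi_x (i0 : Fin S.A) (hi : (i0 : ℕ) + 1 < S.A)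
    (heq : S.mN i0 = S.mN ⟨(i0 : ℕ) + 1, hi⟩) : S.phi (S.gx i0) = -1 := by
  obtain ⟨d1, d2, d3, d4⟩ := S.data_x i0 hi heq
  have hne01 : i0 ≠ ⟨(i0 : ℕ) + 1, hi⟩ := by
    intro h
    have := congrArg Fin.val h
    simp at this
  have hsig : S.sigmaN (S.gx i0) = Equiv.swap i0 ⟨(i0 : ℕ) + 1, hi⟩ := by
    apply Equiv.ext
    intro i
    rcases eq_or_ne i i0 with rfl | hne1
    · rw [sigmaN_apply, d1.1, Equiv.swap_apply_left]
    rcases eq_or_ne i ⟨(i0 : ℕ) + 1, hi⟩ with rfl | hne2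
    · rw [sigmaN_apply, d2.1, Equiv.swap_apply_right]
    · rw [sigmaN_apply, (d3 i hne1 hne2).1, Equiv.swap_apply_of_ne_of_ne hne1 hne2]
  have hN : (∏ i, S.zuN i ^ S.tN (S.gx i0) i) = 1 := by
    apply Finset.prod_eq_one
    intro i _
    rcases eq_or_ne i i0 with rfl | hne1
    · rw [d1.2, pow_zero]
    rcases eq_or_ne i ⟨(i0 : ℕ) + 1, hi⟩ with rfl | hne2
    · rw [d2.2, pow_zero]
    · rw [(d3 i hne1 hne2).2, pow_zero]
  have hP1 : (∏ j, zu (S.mP j) ^ S.uP (S.gx i0) j) = 1 :=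
    Finset.prod_eq_one fun j _ => by rw [(d4 j).2.1, pow_zero]
  have hP2 : (∏ j, if S.eP (S.gx i0) j then S.kapP j else 1) = 1 :=
    Finset.prod_eq_one fun j _ => by rw [(d4 j).2.2]; rfl
  rw [phi_apply, phiFun, hsig, Equiv.Perm.sign_swap hne01, intUnit_neg_one, hN, hP1, hP2,
    mul_one, mul_one, mul_one]

lemma phi_y (j0 : Fin S.B) (hj : (j0 : ℕ) + 1 < S.B)
    (heq : S.mP j0 = S.mP ⟨(j0 : ℕ) + 1, hj⟩) : S.phi (S.gy j0) = 1 := by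
  obtain ⟨d1, d2, d3, d4⟩ := S.data_y j0 hj heq
  have hsig : S.sigmaN (S.gy j0) = 1 := Equiv.ext fun i => (d4 i).1
  have hN : (∏ i, S.zuN i ^ S.tN (S.gy j0) i) = 1 :=
    Finset.prod_eq_one fun i _ => by rw [(d4 i).2, pow_zero]
  have hP1 : (∏ j, zu (S.mP j) ^ S.uP (S.gy j0) j) = 1 := by
    apply Finset.prod_eq_one
    intro j _
    rcases eq_or_ne j j0 with rfl | hne1
    · rw [d1.2.1, pow_zero]
    rcases eq_or_ne j ⟨(j0 : ℕ) + 1, hj⟩ with rfl | hne2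
    · rw [d2.2.1, pow_zero]
    · rw [(d3 j hne1 hne2).2.1, pow_zero]
  have hP2 : (∏ j, if S.eP (S.gy j0) j then S.kapP j else 1) = 1 := by
    apply Finset.prod_eq_one
    intro j _
    rcases eq_or_ne j j0 with rfl | hne1
    · rw [d1.2.2]; rfl
    rcases eq_or_ne j ⟨(j0 : ℕ) + 1, hj⟩ with rfl | hne2
    · rw [d2.2.2]; rfl
    · rw [(d3 j hne1 hne2).2.2]; rfl
  rw [phi_apply, phiFun, hsig, map_one, map_one, hN, hP1, hP2, one_mul, one_mul, mul_one]

lemma phi_r (j0 : Fin S.B) : S.phi (S.gr j0) = S.kapP j0 := by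
  have hsig : S.sigmaN (S.gr j0) = 1 := Equiv.ext fun i => (S.dataN_r j0 i).1
  have hN : (∏ i, S.zuN i ^ S.tN (S.gr j0) i) = 1 :=
    Finset.prod_eq_one fun i _ => by rw [(S.dataN_r j0 i).2, pow_zero]
  have hP1 : (∏ j, zu (S.mP j) ^ S.uP (S.gr j0) j) = 1 := by
    apply Finset.prod_eq_one
    intro j _
    rcases eq_or_ne j j0 with rfl | hne
    · rw [(S.data_r_self j).2.1, pow_zero]
    · rw [(S.data_r_other j0 j (Ne.symm hne)).2.1, pow_zero]
  have hP2 : (∏ j, if S.eP (S.gr j0) j then S.kapP j else 1) = S.kapP j0 := by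
    rw [Finset.prod_eq_single j0
      (fun j _ hne => by rw [(S.data_r_other j0 j (Ne.symm hne)).2.2]; rfl)
      (fun h => absurd (Finset.mem_univ _) h)]
    rw [(S.data_r_self j0).2.2]
    rfl
  rw [phi_apply, phiFun, hsig, map_one, map_one, hN, hP1, hP2, one_mul, one_mul, one_mul]

-- values as complex numbers
lemma phi_c_val (i0 : Fin S.A) (k l : ℕ) (hk : Odd k) (hm : S.mN i0 = 2 ^ l * k) :
    ((S.phi (S.gc i0) : ℂˣ) : ℂ) = zeta (2 * k) := by
  rw [S.phi_c i0, zuN]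
  have hl : (S.mN i0).factorization 2 = l := by rw [hm]; exact factorization_two l k hk
  rw [hl, hm]
  rw [Units.val_pow_eq_pow_val, zu_coe]
  exact zeta_pow_two_pow l k hk

lemma phi_d_val (j0 : Fin S.B) : ((S.phi (S.gd j0) : ℂˣ) : ℂ) = zeta (S.mP j0) := by
  rw [S.phi_d j0, zu_coe]

lemma phi_x_val (i0 : Fin S.A) (hi : (i0 : ℕ) + 1 < S.A)
    (heq : S.mN i0 = S.mN ⟨(i0 : ℕ) + 1, hi⟩) : ((S.phi (S.gx i0) : ℂˣ) : ℂ) = -1 := by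
  rw [S.phi_x i0 hi heq]
  simp

lemma phi_y_val (j0 : Fin S.B) (hj : (j0 : ℕ) + 1 < S.B)
    (heq : S.mP j0 = S.mP ⟨(j0 : ℕ) + 1, hj⟩) : ((S.phi (S.gy j0) : ℂˣ) : ℂ) = 1 := by
  rw [S.phi_y j0 hj heq]
  rfl

lemma phi_r_val (j0 : Fin S.B) : ((S.phi (S.gr j0) : ℂˣ) : ℂ) = (-1 : ℂ) ^ (S.mP j0 - 1) := by
  rw [S.phi_r j0, kapP]
  simp

end Ctx
end S17

namespace S17

open Equiv

def invSet {s : ℕ} (σ : Equiv.Perm (Fin s)) : Finset (Fin s × Fin s) :=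
  Finset.univ.filter (fun p => p.1 < p.2 ∧ σ p.2 < σ p.1)

lemma exists_descent {s : ℕ} (σ : Equiv.Perm (Fin s)) (hσ : σ ≠ 1) :
    ∃ (i : ℕ) (h : i + 1 < s), σ ⟨i + 1, h⟩ < σ ⟨i, Nat.lt_of_succ_lt h⟩ := by
  by_contra hno
  push_neg at hno
  apply hσ
  cases s with
  | zero => exact Equiv.ext fun x => x.elim0
  | succ s' =>
    have hmono : StrictMono σ := by
      rw [Fin.strictMono_iff_lt_succ]
      intro i
      have h2 := hno (i : ℕ) (Nat.succ_lt_succ i.isLt)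
      have e1 : (⟨(i : ℕ), Nat.lt_of_succ_lt (Nat.succ_lt_succ i.isLt)⟩ : Fin (s' + 1)) =
          i.castSucc := rfl
      have e2 : (⟨(i : ℕ) + 1, Nat.succ_lt_succ i.isLt⟩ : Fin (s' + 1)) = i.succ := rfl
      rw [e1, e2] at h2
      rcases lt_or_eq_of_le h2 with h3 | h3
      · exact h3
      · exfalso
        have := σ.injective h3
        have h4 : i.castSucc < i.succ := Fin.castSucc_lt_succ (i := i)
        rw [this] at h4
        exact lt_irrefl _ h4
    have hrange : Set.range (σ : Fin (s' + 1) → Fin (s' + 1)) = Set.range (id : Fin (s' + 1) → Fin (s' + 1)) := by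
      rw [Equiv.range_eq_univ, Set.range_id]
    have hfun : (σ : Fin (s' + 1) → Fin (s' + 1)) = id :=
      (hmono.range_inj strictMono_id).mp hrange
    exact Equiv.ext fun x => congrFun hfun x

lemma inv_swap_lt {s : ℕ} (σ : Equiv.Perm (Fin s)) (a b : Fin s) (hab : (a : ℕ) + 1 = (b : ℕ))
    (hd : σ b < σ a) : (invSet (σ * Equiv.swap a b)).card < (invSet σ).card := by
  set t := Equiv.swap a b with ht
  have hab' : a < b := by rw [Fin.lt_def]; omega
  have hne : a ≠ b := ne_of_lt hab'
  have hta : t a = b := Equiv.swap_apply_left a b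
  have htb : t b = a := Equiv.swap_apply_right a b
  have key : ∀ j k : Fin s, j < k → (j, k) ≠ (a, b) → t j < t k := by
    intro j k hjk hne2
    rcases eq_or_ne j a with rfl | hja
    · rcases eq_or_ne k b with rfl | hkb
      · exact absurd rfl hne2
      · have hka : k ≠ j := (ne_of_gt hjk)
        rw [hta, Equiv.swap_apply_of_ne_of_ne (Ne.symm (ne_of_lt hjk)) hkb]
        have hv : (k : ℕ) ≠ (b : ℕ) := fun hE => hkb (Fin.ext hE)
        rw [Fin.lt_def] at *
        omega
    rcases eq_or_ne j b with rfl | hjb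
    · have hka : k ≠ a := by
        intro hE
        rw [hE] at hjk
        exact absurd (lt_trans hab' hjk) (lt_irrefl _)
      have hkb : k ≠ j := (ne_of_gt hjk)
      rw [htb, Equiv.swap_apply_of_ne_of_ne hka hkb]
      exact lt_trans hab' hjk
    · rw [Equiv.swap_apply_of_ne_of_ne hja hjb]
      rcases eq_or_ne k a with rfl | hka
      · rw [hta, Fin.lt_def] at *
        omega
      rcases eq_or_ne k b with rfl | hkb
      · rw [htb]
        have hv : (j : ℕ) ≠ (a : ℕ) := fun hE => hja (Fin.ext hE)
        rw [Fin.lt_def] at *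
        omega
      · rw [Equiv.swap_apply_of_ne_of_ne hka hkb]
        exact hjk
  have hmem : (a, b) ∈ invSet σ := by
    rw [invSet, Finset.mem_filter]
    exact ⟨Finset.mem_univ _, hab', hd⟩
  have hnotmem : (a, b) ∉ invSet (σ * t) := by
    rw [invSet, Finset.mem_filter]
    rintro ⟨-, -, hcon⟩
    rw [Equiv.Perm.mul_apply, Equiv.Perm.mul_apply, hta, htb] at hcon
    exact absurd (lt_trans hcon hd) (lt_irrefl _)
  have himg : ((invSet (σ * t)).image (fun p : Fin s × Fin s => (t p.1, t p.2))) ⊆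
      (invSet σ).erase (a, b) := by
    intro q hq
    rw [Finset.mem_image] at hq
    obtain ⟨p, hp, rfl⟩ := hq
    have hpne : p ≠ (a, b) := fun hE => hnotmem (hE ▸ hp)
    rw [invSet, Finset.mem_filter] at hp
    obtain ⟨-, h1, h2⟩ := hp
    have hpne' : (p.1, p.2) ≠ (a, b) := by simpa using hpne
    have h1' : t p.1 < t p.2 := key p.1 p.2 h1 hpne'
    refine Finset.mem_erase.mpr ⟨?_, ?_⟩
    · intro hE
      rw [Prod.ext_iff] at hE
      obtain ⟨hE1, hE2⟩ := hE
      have hp1 : p.1 = b := by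
        have := congrArg t hE1
        rwa [Equiv.swap_apply_self, hta] at this
      have hp2 : p.2 = a := by
        have := congrArg t hE2
        rwa [Equiv.swap_apply_self, htb] at this
      rw [hp1, hp2] at h1
      exact absurd (lt_trans h1 hab') (lt_irrefl _)
    · rw [invSet, Finset.mem_filter]
      refine ⟨Finset.mem_univ _, h1', ?_⟩
      rw [Equiv.Perm.mul_apply, Equiv.Perm.mul_apply] at h2
      exact h2
  have hinj : Set.InjOn (fun p : Fin s × Fin s => (t p.1, t p.2)) ↑(invSet (σ * t)) := by
    intro p _ q _ hE
    rw [Prod.ext_iff] at hE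
    obtain ⟨hE1, hE2⟩ := hE
    have e1 : p.1 = q.1 := t.injective hE1
    have e2 : p.2 = q.2 := t.injective hE2
    exact Prod.ext e1 e2
  calc (invSet (σ * t)).card = ((invSet (σ * t)).image (fun p : Fin s × Fin s => (t p.1, t p.2))).card :=
        (Finset.card_image_of_injOn hinj).symm
    _ ≤ ((invSet σ).erase (a, b)).card := Finset.card_le_card himg
    _ < (invSet σ).card := by
        rw [Finset.card_erase_of_mem hmem]
        have := Finset.card_pos.mpr ⟨_, hmem⟩
        omega

theorem swap_closure {α : Type*} [LinearOrder α] {s : ℕ} (f : Fin s → α) (hf : Monotone f)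
    (σ : Equiv.Perm (Fin s)) (hσf : ∀ i, f (σ i) = f i) :
    σ ∈ Subgroup.closure {τ : Equiv.Perm (Fin s) | ∃ (i : ℕ) (h : i + 1 < s),
      f ⟨i, Nat.lt_of_succ_lt h⟩ = f ⟨i + 1, h⟩ ∧
      τ = Equiv.swap ⟨i, Nat.lt_of_succ_lt h⟩ ⟨i + 1, h⟩} := by
  generalize hI : (invSet σ).card = N
  induction N using Nat.strong_induction_on generalizing σ with
  | _ N ih =>
  rcases eq_or_ne σ 1 with rfl | hne
  · exact Subgroup.one_mem _
  obtain ⟨i, h, hd⟩ := exists_descent σ hne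
  set a : Fin s := ⟨i, Nat.lt_of_succ_lt h⟩ with ha
  set b : Fin s := ⟨i + 1, h⟩ with hb
  have hfab : f a = f b := by
    refine le_antisymm (hf (le_of_lt (by rw [ha, hb]; exact Fin.mk_lt_mk.mpr (by omega)))) ?_
    rw [← hσf a, ← hσf b]
    exact hf (le_of_lt hd)
  have hτmem : Equiv.swap a b ∈ {τ : Equiv.Perm (Fin s) | ∃ (i : ℕ) (h : i + 1 < s),
      f ⟨i, Nat.lt_of_succ_lt h⟩ = f ⟨i + 1, h⟩ ∧
      τ = Equiv.swap ⟨i, Nat.lt_of_succ_lt h⟩ ⟨i + 1, h⟩} := ⟨i, h, hfab, rfl⟩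
  have hσ' : ∀ i', f ((σ * Equiv.swap a b) i') = f i' := by
    intro i'
    rw [Equiv.Perm.mul_apply]
    rcases eq_or_ne i' a with rfl | h1
    · rw [Equiv.swap_apply_left, hσf b, ← hfab]
    rcases eq_or_ne i' b with rfl | h2
    · rw [Equiv.swap_apply_right, hσf a, hfab]
    · rw [Equiv.swap_apply_of_ne_of_ne h1 h2, hσf]
  have hlt : (invSet (σ * Equiv.swap a b)).card < N := by
    rw [← hI]
    exact inv_swap_lt σ a b rfl hd
  have hmem' := ih _ hlt (σ * Equiv.swap a b) hσ' rfl
  have hfinal : σ = (σ * Equiv.swap a b) * Equiv.swap a b := by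
    rw [mul_assoc, Equiv.swap_mul_self, mul_one]
  rw [hfinal]
  exact Subgroup.mul_mem _ hmem' (Subgroup.subset_closure hτmem)

end S17

namespace S17
namespace Ctx

open Equiv

variable {n : ℕ} (S : Ctx n)

def gens : Set ↥S.Cz :=
  {g | (∃ i, g = S.gc i) ∨ (∃ j, g = S.gd j) ∨
       (∃ (i : Fin S.A) (hi : (i : ℕ) + 1 < S.A), S.mN i = S.mN ⟨(i : ℕ) + 1, hi⟩ ∧ g = S.gx i) ∨
       (∃ (j : Fin S.B) (hj : (j : ℕ) + 1 < S.B), S.mP j = S.mP ⟨(j : ℕ) + 1, hj⟩ ∧ g = S.gy j) ∨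
       (∃ j, g = S.gr j)}

-- extensionality from base points
lemma ext_of_bases (g h : ↥S.Cz) (hN : ∀ i, S.pi g (S.BPn i) = S.pi h (S.BPn i))
    (hP : ∀ j, S.pi g (S.BPp j) = S.pi h (S.BPp j)) : g = h := by
  have hpi : S.pi g = S.pi h := by
    apply Equiv.ext
    intro p
    have hp1 : (p.1 : ℕ) < n := p.1.isLt
    rcases S.cover hp1 with ⟨i, hi⟩ | ⟨j, hj⟩
    · obtain ⟨t, ht, rfl⟩ := S.reprN i p hi
      rw [S.pi_w_pow, S.pi_w_pow, hN]
    · obtain ⟨t, e, ht, rfl⟩ := S.reprP j p hj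
      rw [S.pi_w_pow, S.pi_w_pow, S.pi_np, S.pi_np, hP]
  exact Subtype.ext (Subtype.ext hpi)

lemma fix_pos_point (X : ↥S.Cz) (hfix : ∀ j, S.pi X (S.BPp j) = S.BPp j)
    {j : Fin S.B} (p : Fin n × Bool) (hp : S.inP j (p.1 : ℕ)) : S.pi X p = p := by
  obtain ⟨t, e, ht, rfl⟩ := S.reprP j p hp
  rw [S.pi_w_pow, S.pi_np, hfix]

-- powers of generators
lemma hyp_negPt (u : ↥(HypOct n)) (p : Fin n × Bool) :
    (u : Equiv.Perm (Fin n × Bool)) (negPt n p) = negPt n ((u : Equiv.Perm (Fin n × Bool)) p) := by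
  have hg : (u : Equiv.Perm (Fin n × Bool)) ∈ Subgroup.centralizer {negPt n} := u.2
  rw [Subgroup.mem_centralizer_iff] at hg
  have h := hg (negPt n) (Set.mem_singleton _)
  calc (u : Equiv.Perm (Fin n × Bool)) (negPt n p)
      = ((u : Equiv.Perm (Fin n × Bool)) * negPt n) p := rfl
    _ = (negPt n * (u : Equiv.Perm (Fin n × Bool))) p := by rw [← h]
    _ = negPt n ((u : Equiv.Perm (Fin n × Bool)) p) := rfl

lemma c_pow_fix (i : Fin S.A) (k : ℕ) (p : Fin n × Bool) (h : ¬ S.inN i (p.1 : ℕ)) :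
    ((S.cP i) ^ k) p = p := by
  induction k with
  | zero => rfl
  | succ k ih => rw [pow_succ, Equiv.Perm.mul_apply, S.c_fix i p h, ih]

lemma c_pow_on (i : Fin S.A) (k : ℕ) (p : Fin n × Bool) (h : S.inN i (p.1 : ℕ)) :
    ((S.cP i) ^ k) p = (S.W ^ k) p := by
  induction k with
  | zero => rfl
  | succ k ih =>
    rw [pow_succ', pow_succ', Equiv.Perm.mul_apply, Equiv.Perm.mul_apply, ih,
      S.w_on_N i _ (S.w_pow_N_stab i k p h)]

lemma d_pow_fix (j : Fin S.B) (k : ℕ) (p : Fin n × Bool) (h : ¬ S.inP j (p.1 : ℕ)) :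
    ((S.dP j) ^ k) p = p := by
  induction k with
  | zero => rfl
  | succ k ih => rw [pow_succ, Equiv.Perm.mul_apply, S.d_fix j p h, ih]

lemma d_pow_on (j : Fin S.B) (k : ℕ) (p : Fin n × Bool) (h : S.inP j (p.1 : ℕ)) :
    ((S.dP j) ^ k) p = (S.W ^ k) p := by
  induction k with
  | zero => rfl
  | succ k ih =>
    rw [pow_succ', pow_succ', Equiv.Perm.mul_apply, Equiv.Perm.mul_apply, ih,
      S.w_on_P j _ (S.w_pow_P_stab j k p h).1]

lemma pi_pow (g : ↥S.Cz) (k : ℕ) : S.pi (g ^ k) = S.pi g ^ k := map_pow S.piHom g k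

lemma pi_one' : S.pi (1 : ↥S.Cz) = 1 := map_one S.piHom

lemma pi_ofFn_prod {s : ℕ} (f : Fin s → ↥S.Cz) :
    S.pi ((List.ofFn f).prod) = (List.ofFn (fun k => S.pi (f k))).prod := by
  show S.piHom _ = _
  rw [map_list_prod, List.map_ofFn]
  rfl

-- X realization
lemma Xreal (σ : Equiv.Perm (Fin S.A)) (hσ : ∀ i, S.mN (σ i) = S.mN i) :
    ∃ X : ↥S.Cz, X ∈ Subgroup.closure S.gens ∧
      (∀ i, S.pi X (S.BPn i) = S.BPn (σ i)) ∧ (∀ j, S.pi X (S.BPp j) = S.BPp j) := by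
  have hkey := swap_closure (fun i => S.mN i) (fun i i' h => S.mN_mono h) σ hσ
  refine Subgroup.closure_induction ?_ ?_ ?_ ?_ hkey
  · rintro τ ⟨i, h, hfeq, rfl⟩
    set i0 : Fin S.A := ⟨i, Nat.lt_of_succ_lt h⟩ with hi0
    have heq : S.mN i0 = S.mN ⟨(i0 : ℕ) + 1, h⟩ := hfeq
    obtain ⟨e1, e2, e3, e4⟩ := S.x_bases i0 h heq
    refine ⟨S.gx i0, Subgroup.subset_closure (Or.inr (Or.inr (Or.inl ⟨i0, h, heq, rfl⟩))),
      ?_, fun j => by rw [pi_gx]; exact e4 j⟩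
    intro i''
    rw [pi_gx]
    rcases eq_or_ne i'' i0 with rfl | hne1
    · rw [e1, Equiv.swap_apply_left]
    rcases eq_or_ne i'' ⟨(i0 : ℕ) + 1, h⟩ with rfl | hne2
    · rw [e2, Equiv.swap_apply_right]
    · rw [e3 i'' hne1 hne2, Equiv.swap_apply_of_ne_of_ne hne1 hne2]
  · exact ⟨1, Subgroup.one_mem _, fun i => by rw [S.pi_one]; rfl, fun j => by rw [S.pi_one]⟩
  · rintro τ τ' - - ⟨X, hX, hXN, hXP⟩ ⟨X', hX', hXN', hXP'⟩
    refine ⟨X * X', Subgroup.mul_mem _ hX hX', fun i => ?_, fun j => ?_⟩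
    · rw [S.pi_mul, hXN', hXN]; rfl
    · rw [S.pi_mul, hXP', hXP]
  · rintro τ - ⟨X, hX, hXN, hXP⟩
    refine ⟨X⁻¹, Subgroup.inv_mem _ hX, fun i => ?_, fun j => ?_⟩
    · have h1 : S.pi X (S.BPn (τ⁻¹ i)) = S.BPn i := by
        rw [hXN]
        congr 1
        exact Equiv.apply_symm_apply τ i
      rw [← h1, S.pi_inv]
    · conv_lhs => rw [← hXP j]
      rw [S.pi_inv]

lemma Yreal (σ : Equiv.Perm (Fin S.B)) (hσ : ∀ j, S.mP (σ j) = S.mP j) :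
    ∃ Y : ↥S.Cz, Y ∈ Subgroup.closure S.gens ∧
      (∀ j, S.pi Y (S.BPp j) = S.BPp (σ j)) ∧ (∀ i, S.pi Y (S.BPn i) = S.BPn i) := by
  have hkey := swap_closure (fun j => OrderDual.toDual (S.mP j))
    (fun j j' h => by exact S.mP_anti h) σ (fun j => congrArg OrderDual.toDual (hσ j))
  refine Subgroup.closure_induction ?_ ?_ ?_ ?_ hkey
  · rintro τ ⟨j, h, hfeq, rfl⟩
    set j0 : Fin S.B := ⟨j, Nat.lt_of_succ_lt h⟩ with hj0
    have heq : S.mP j0 = S.mP ⟨(j0 : ℕ) + 1, h⟩ := hfeq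
    obtain ⟨e1, e2, e3, e4⟩ := S.y_bases j0 h heq
    refine ⟨S.gy j0, Subgroup.subset_closure (Or.inr (Or.inr (Or.inr (Or.inl ⟨j0, h, heq, rfl⟩)))),
      ?_, fun i => by rw [pi_gy]; exact e4 i⟩
    intro j''
    rw [pi_gy]
    rcases eq_or_ne j'' j0 with rfl | hne1
    · rw [e1, Equiv.swap_apply_left]
    rcases eq_or_ne j'' ⟨(j0 : ℕ) + 1, h⟩ with rfl | hne2
    · rw [e2, Equiv.swap_apply_right]
    · rw [e3 j'' hne1 hne2, Equiv.swap_apply_of_ne_of_ne hne1 hne2]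
  · exact ⟨1, Subgroup.one_mem _, fun j => by rw [S.pi_one]; rfl, fun i => by rw [S.pi_one]⟩
  · rintro τ τ' - - ⟨Y, hY, hYP, hYN⟩ ⟨Y', hY', hYP', hYN'⟩
    refine ⟨Y * Y', Subgroup.mul_mem _ hY hY', fun j => ?_, fun i => ?_⟩
    · rw [S.pi_mul, hYP', hYP]; rfl
    · rw [S.pi_mul, hYN', hYN]
  · rintro τ - ⟨Y, hY, hYP, hYN⟩
    refine ⟨Y⁻¹, Subgroup.inv_mem _ hY, fun j => ?_, fun i => ?_⟩
    · have h1 : S.pi Y (S.BPp (τ⁻¹ j)) = S.BPp j := by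
        rw [hYP]
        congr 1
        exact Equiv.apply_symm_apply τ j
      rw [← h1, S.pi_inv]
    · conv_lhs => rw [← hYN i]
      rw [S.pi_inv]

-- C realization
lemma Creal (g : ↥S.Cz) : ∃ C : ↥S.Cz, C ∈ Subgroup.closure S.gens ∧
    (∀ i, S.pi C (S.BPn i) = (S.W ^ S.tN g i) (S.BPn i)) ∧
    (∀ j, S.pi C (S.BPp j) = S.BPp j) := by
  have hpi : S.pi ((List.ofFn (fun i => S.gc i ^ S.tN g i)).prod) =
      (List.ofFn (fun i => (S.cP i) ^ S.tN g i)).prod := by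
    rw [S.pi_ofFn_prod]
    simp only [pi_pow, pi_gc]
  refine ⟨(List.ofFn (fun i => S.gc i ^ S.tN g i)).prod, ?_, ?_, ?_⟩
  · apply Subgroup.list_prod_mem
    intro u hu
    rw [List.mem_ofFn] at hu
    obtain ⟨i, rfl⟩ := hu
    have hmem : S.gc i ∈ S.gens := Or.inl ⟨i, rfl⟩
    exact Subgroup.pow_mem _ (Subgroup.subset_closure hmem) _
  · intro i0
    have hfix1 : ∀ i, i0 < i → ((S.cP i) ^ S.tN g i) (S.BPn i0) = S.BPn i0 :=
      fun i hi => S.c_pow_fix i _ _ (S.inN_not (Fin.ne_of_lt hi) (S.inN_base i0))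
    have hfix2 : ∀ i, i < i0 →
        ((S.cP i) ^ S.tN g i) (((S.cP i0) ^ S.tN g i0) (S.BPn i0)) =
          ((S.cP i0) ^ S.tN g i0) (S.BPn i0) := by
      intro i hi
      rw [S.c_pow_on i0 _ _ (S.inN_base i0)]
      exact S.c_pow_fix i _ _
        (S.inN_not (Fin.ne_of_lt hi).symm (S.w_pow_N_stab i0 _ _ (S.inN_base i0)))
    have happ := ofFn_prod_apply (fun i => (S.cP i) ^ S.tN g i) (S.BPn i0) i0 hfix1 hfix2
    rw [hpi, happ]
    exact S.c_pow_on i0 _ _ (S.inN_base i0)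
  · intro j
    rw [hpi]
    apply prod_apply_fix
    intro σ hσ
    rw [List.mem_ofFn] at hσ
    obtain ⟨i, rfl⟩ := hσ
    exact S.c_pow_fix i _ _ (S.not_inN_ge (S.sum_le_bP j))

-- D realization
lemma Dreal (g : ↥S.Cz) : ∃ D : ↥S.Cz, D ∈ Subgroup.closure S.gens ∧
    (∀ j, ∀ e : Bool, S.pi D (np e (S.BPp j)) = (S.W ^ S.uP g j) (np e (S.BPp j))) ∧
    (∀ i, S.pi D (S.BPn i) = S.BPn i) := by
  have hpi : S.pi ((List.ofFn (fun j => S.gd j ^ S.uP g j)).prod) =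
      (List.ofFn (fun j => (S.dP j) ^ S.uP g j)).prod := by
    rw [S.pi_ofFn_prod]
    simp only [pi_pow, pi_gd]
  refine ⟨(List.ofFn (fun j => S.gd j ^ S.uP g j)).prod, ?_, ?_, ?_⟩
  · apply Subgroup.list_prod_mem
    intro u hu
    rw [List.mem_ofFn] at hu
    obtain ⟨j, rfl⟩ := hu
    have hmem : S.gd j ∈ S.gens := Or.inr (Or.inl ⟨j, rfl⟩)
    exact Subgroup.pow_mem _ (Subgroup.subset_closure hmem) _
  · intro j0 e
    have hbase : S.inP j0 ((np e (S.BPp j0)).1 : ℕ) := by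
      rw [np_apply]; exact S.inP_base j0
    have hfix1 : ∀ j, j0 < j → ((S.dP j) ^ S.uP g j) (np e (S.BPp j0)) = np e (S.BPp j0) :=
      fun j hj => S.d_pow_fix j _ _ (S.inP_not (Fin.ne_of_lt hj) hbase)
    have hfix2 : ∀ j, j < j0 →
        ((S.dP j) ^ S.uP g j) (((S.dP j0) ^ S.uP g j0) (np e (S.BPp j0))) =
          ((S.dP j0) ^ S.uP g j0) (np e (S.BPp j0)) := by
      intro j hj
      rw [S.d_pow_on j0 _ _ hbase]
      exact S.d_pow_fix j _ _
        (S.inP_not (Fin.ne_of_lt hj).symm (S.w_pow_P_stab j0 _ _ hbase).1)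
    have happ := ofFn_prod_apply (fun j => (S.dP j) ^ S.uP g j) (np e (S.BPp j0)) j0 hfix1 hfix2
    rw [hpi, happ]
    exact S.d_pow_on j0 _ _ hbase
  · intro i
    rw [hpi]
    apply prod_apply_fix
    intro σ hσ
    rw [List.mem_ofFn] at hσ
    obtain ⟨j, rfl⟩ := hσ
    exact S.d_pow_fix j _ _ (S.not_inP_lt (S.inN_lt i (S.inN_base i)))

-- R realization
lemma Rreal (g : ↥S.Cz) : ∃ R : ↥S.Cz, R ∈ Subgroup.closure S.gens ∧
    (∀ j, S.pi R (S.BPp j) = np (S.eP g j) (S.BPp j)) ∧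
    (∀ i, S.pi R (S.BPn i) = S.BPn i) := by
  have hpi : S.pi ((List.ofFn (fun j => if S.eP g j then S.gr j else 1)).prod) =
      (List.ofFn (fun j => if S.eP g j then S.rP j else 1)).prod := by
    rw [S.pi_ofFn_prod]
    simp only [apply_ite S.pi, pi_gr, pi_one']
  have hrfix : ∀ (j j' : Fin S.B), j ≠ j' → ∀ e : Bool,
      S.rP j (np e (S.BPp j')) = np e (S.BPp j') := by
    intro j j' hne e
    apply S.r_fix
    rw [np_apply]
    exact S.inP_not (Ne.symm hne) (S.inP_base j')
  have hrfix' : ∀ (j j' : Fin S.B), j ≠ j' → S.rP j (S.BPp j') = S.BPp j' := by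
    intro j j' hne
    have := hrfix j j' hne false
    rwa [show np false (S.BPp j') = S.BPp j' from rfl] at this
  have hrself : ∀ j0, S.rP j0 (S.BPp j0) = np true (S.BPp j0) := by
    intro j0
    obtain ⟨h1, h2⟩ := S.hr' j0 (S.BPp j0)
    rw [if_pos ⟨le_rfl, by have := S.mP_pos j0; simpa using this⟩] at h2
    rw [np_apply]
    exact point_eq (congrArg Fin.val h1) (by rw [h2]; rfl)
  refine ⟨(List.ofFn (fun j => if S.eP g j then S.gr j else 1)).prod, ?_, ?_, ?_⟩
  · apply Subgroup.list_prod_mem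
    intro u hu
    rw [List.mem_ofFn] at hu
    obtain ⟨j, rfl⟩ := hu
    show (if S.eP g j = true then S.gr j else 1) ∈ _
    by_cases he : S.eP g j
    · rw [if_pos he]
      have hmem : S.gr j ∈ S.gens := Or.inr (Or.inr (Or.inr (Or.inr ⟨j, rfl⟩)))
      exact Subgroup.subset_closure hmem
    · rw [if_neg he]; exact Subgroup.one_mem _
  · intro j0
    have hfix1 : ∀ j, j0 < j →
        (if S.eP g j then S.rP j else 1) (S.BPp j0) = S.BPp j0 := by
      intro j hj
      by_cases he : S.eP g j
      · rw [if_pos he]; exact hrfix' j j0 (Fin.ne_of_lt hj).symm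
      · rw [if_neg he]; rfl
    have hfix2 : ∀ j, j < j0 →
        (if S.eP g j then S.rP j else 1) ((if S.eP g j0 then S.rP j0 else 1) (S.BPp j0)) =
          (if S.eP g j0 then S.rP j0 else 1) (S.BPp j0) := by
      intro j hj
      by_cases he0 : S.eP g j0
      · rw [if_pos he0, hrself j0]
        by_cases he : S.eP g j
        · rw [if_pos he]; exact hrfix j j0 (Fin.ne_of_lt hj) true
        · rw [if_neg he]; rfl
      · rw [if_neg he0]
        show (if S.eP g j then S.rP j else 1) (S.BPp j0) = S.BPp j0
        by_cases he : S.eP g j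
        · rw [if_pos he]; exact hrfix' j j0 (Fin.ne_of_lt hj)
        · rw [if_neg he]; rfl
    have happ := ofFn_prod_apply (fun j => if S.eP g j then S.rP j else 1) (S.BPp j0) j0
      hfix1 hfix2
    rw [hpi, happ]
    show (if S.eP g j0 = true then S.rP j0 else 1) (S.BPp j0) = np (S.eP g j0) (S.BPp j0)
    by_cases he : S.eP g j0
    · rw [if_pos he, he, hrself j0]
    · rw [if_neg he]
      have he' : S.eP g j0 = false := by simpa using he
      rw [he']
      rfl
  · intro i
    rw [hpi]
    apply prod_apply_fix
    intro σ hσ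
    rw [List.mem_ofFn] at hσ
    obtain ⟨j, rfl⟩ := hσ
    show (if S.eP g j = true then S.rP j else 1) (S.BPn i) = S.BPn i
    by_cases he : S.eP g j
    · rw [if_pos he]
      exact S.r_fix j _ (S.not_inP_lt (S.inN_lt i (S.inN_base i)))
    · rw [if_neg he]; rfl

-- the generation theorem
theorem gen_top (g : ↥S.Cz) : g ∈ Subgroup.closure S.gens := by
  obtain ⟨X, hXm, hXN, hXP⟩ := S.Xreal (S.sigmaN g) (fun i => S.mN_sN g i)
  obtain ⟨C, hCm, hCN, hCP⟩ := S.Creal g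
  obtain ⟨Y, hYm, hYP, hYN⟩ := S.Yreal (S.sigmaP g) (fun j => S.mP_sP g j)
  obtain ⟨D, hDm, hDP, hDN⟩ := S.Dreal g
  obtain ⟨R, hRm, hRP, hRN⟩ := S.Rreal g
  have hG : X * (C * (Y * (D * R))) = g := by
    apply S.ext_of_bases
    · intro i
      rw [S.pi_mul, S.pi_mul, S.pi_mul, S.pi_mul, hRN, hDN, hYN, hCN]
      rw [S.pi_w_pow, hXN]
      rw [(S.dataN g i).2.2]
      rfl
    · intro j
      rw [S.pi_mul, S.pi_mul, S.pi_mul, S.pi_mul, hRP, hDP, S.pi_w_pow, S.pi_np, hYP,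
        S.sigmaP_apply]
      have hq : S.inP (S.sP g j) ((((S.W ^ S.uP g j) (np (S.eP g j) (S.BPp (S.sP g j)))).1 : ℕ)) := by
        have hbase : S.inP (S.sP g j) ((np (S.eP g j) (S.BPp (S.sP g j))).1 : ℕ) := by
          rw [np_apply]; exact S.inP_base _
        exact (S.w_pow_P_stab _ _ _ hbase).1
      rw [S.fix_pos_point C hCP _ hq, S.fix_pos_point X hXP _ hq]
      rw [(S.dataP g j).2.2]
  rw [← hG]
  exact Subgroup.mul_mem _ hXm (Subgroup.mul_mem _ hCm
    (Subgroup.mul_mem _ hYm (Subgroup.mul_mem _ hDm hRm)))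

-- homomorphisms agreeing on generators agree
lemma hom_ext {ψ χ : ↥S.Cz →* ℂˣ} (hgen : ∀ g ∈ S.gens, ψ g = χ g) : ψ = χ := by
  apply MonoidHom.ext
  intro g
  have hmem := S.gen_top g
  induction hmem using Subgroup.closure_induction with
  | mem u hu => exact hgen u hu
  | one => rw [map_one, map_one]
  | mul u v hu hv ihu ihv => rw [map_mul, map_mul, ihu, ihv]
  | inv u hu ihu => rw [map_inv, map_inv, ihu]

end Ctx
end S17

namespace S17
namespace Ctx

variable {n : ℕ} (S : Ctx n)

theorem main : ∃! φ : ↥S.Cz →* ℂˣ,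
    (∀ (i : Fin S.A) (k l : ℕ), Odd k → S.mN i = 2 ^ l * k →
      ((φ (S.gc i) : ℂˣ) : ℂ) = zeta (2 * k)) ∧
    (∀ j : Fin S.B, ((φ (S.gd j) : ℂˣ) : ℂ) = zeta (S.mP j)) ∧
    (∀ (i : Fin S.A) (hi : (i : ℕ) + 1 < S.A), S.mN i = S.mN ⟨(i : ℕ) + 1, hi⟩ →
      ((φ (S.gx i) : ℂˣ) : ℂ) = -1) ∧
    (∀ (j : Fin S.B) (hj : (j : ℕ) + 1 < S.B), S.mP j = S.mP ⟨(j : ℕ) + 1, hj⟩ →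
      ((φ (S.gy j) : ℂˣ) : ℂ) = 1) ∧
    (∀ j : Fin S.B, ((φ (S.gr j) : ℂˣ) : ℂ) = (-1 : ℂ) ^ (S.mP j - 1)) := by
  refine ⟨S.phi, ⟨?_, ?_, ?_, ?_, ?_⟩, ?_⟩
  · intro i k l hk hm
    exact S.phi_c_val i k l hk hm
  · exact S.phi_d_val
  · intro i hi heq
    exact S.phi_x_val i hi heq
  · intro j hj heq
    exact S.phi_y_val j hj heq
  · exact S.phi_r_val
  · rintro ψ ⟨h1, h2, h3, h4, h5⟩
    apply S.hom_ext
    rintro g (⟨i, rfl⟩ | ⟨j, rfl⟩ | ⟨i, hi, heq, rfl⟩ | ⟨j, hj, heq, rfl⟩ | ⟨j, rfl⟩)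
    · have hm0 : S.mN i ≠ 0 := (S.mN_pos i).ne'
      have hdecomp : S.mN i = 2 ^ ((S.mN i).factorization 2) *
          ((S.mN i) / 2 ^ ((S.mN i).factorization 2)) :=
        (Nat.ordProj_mul_ordCompl_eq_self (S.mN i) 2).symm
      have hodd : Odd ((S.mN i) / 2 ^ ((S.mN i).factorization 2)) := by
        have hnd := Nat.not_dvd_ordCompl Nat.prime_two hm0
        exact Nat.odd_iff.mpr (Nat.two_dvd_ne_zero.mp hnd)
      apply Units.ext
      rw [h1 i _ _ hodd hdecomp, S.phi_c_val i _ _ hodd hdecomp]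
    · exact Units.ext (by rw [h2 j, S.phi_d_val j])
    · exact Units.ext (by rw [h3 i hi heq, S.phi_x_val i hi heq])
    · exact Units.ext (by rw [h4 j hj heq, S.phi_y_val j hj heq])
    · exact Units.ext (by rw [h5 j, S.phi_r_val j])

end Ctx
end S17


/-- For a signed partition `μ` of `n` there is a *unique* linear character `φ` of
`C_{W_n}(w_μ)` with `φ(c_i) = ζ_{2k_i}` (where `μ⁻_i = 2^{l_i} k_i`, `k_i` odd),
`φ(d_j) = ζ_{μ⁺_j}`, `φ(x_i) = -1` whenever `μ⁻_i = μ⁻_{i+1}`, `φ(y_j) = 1` whenever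
`μ⁺_j = μ⁺_{j+1}`, and `φ(r_j) = (-1)^{μ⁺_j - 1}`. -/
theorem stmt_17 (n : ℕ) (μ : SignedPartition n)
    (c : Fin μ.neg.length → ↥(HypOct n))
    (d : Fin μ.pos.length → ↥(HypOct n))
    (x : Fin μ.neg.length → ↥(HypOct n))
    (y : Fin μ.pos.length → ↥(HypOct n))
    (r : Fin μ.pos.length → ↥(HypOct n))
    (hc : ∀ i : Fin μ.neg.length,
      IsNegCycleOn n (c i : Equiv.Perm (Fin n × Bool))
        ((μ.neg.take (i : ℕ)).sum) (μ.neg.get i))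
    (hd : ∀ j : Fin μ.pos.length,
      IsPosCycleOn n (d j : Equiv.Perm (Fin n × Bool))
        (μ.neg.sum + (μ.pos.take (j : ℕ)).sum) (μ.pos.get j))
    (hx : ∀ (i : Fin μ.neg.length) (hi : (i : ℕ) + 1 < μ.neg.length),
      μ.neg.get i = μ.neg.get ⟨(i : ℕ) + 1, hi⟩ →
      IsBlockSwapOn n (x i : Equiv.Perm (Fin n × Bool))
        ((μ.neg.take (i : ℕ)).sum) (μ.neg.get i))
    (hy : ∀ (j : Fin μ.pos.length) (hj : (j : ℕ) + 1 < μ.pos.length),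
      μ.pos.get j = μ.pos.get ⟨(j : ℕ) + 1, hj⟩ →
      IsBlockSwapOn n (y j : Equiv.Perm (Fin n × Bool))
        (μ.neg.sum + (μ.pos.take (j : ℕ)).sum) (μ.pos.get j))
    (hr : ∀ j : Fin μ.pos.length,
      IsSignFlipOn n (r j : Equiv.Perm (Fin n × Bool))
        (μ.neg.sum + (μ.pos.take (j : ℕ)).sum) (μ.pos.get j))
    (w : ↥(HypOct n)) (hw : w = (List.ofFn c).prod * (List.ofFn d).prod)
    (hcC : ∀ i : Fin μ.neg.length, c i ∈ Subgroup.centralizer {w})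
    (hdC : ∀ j : Fin μ.pos.length, d j ∈ Subgroup.centralizer {w})
    (hxC : ∀ i : Fin μ.neg.length, x i ∈ Subgroup.centralizer {w})
    (hyC : ∀ j : Fin μ.pos.length, y j ∈ Subgroup.centralizer {w})
    (hrC : ∀ j : Fin μ.pos.length, r j ∈ Subgroup.centralizer {w})
    :
    ∃! φ : ↥(Subgroup.centralizer {w}) →* ℂˣ,
      (∀ (i : Fin μ.neg.length) (k l : ℕ), Odd k → μ.neg.get i = 2 ^ l * k →
        ((φ ⟨c i, hcC i⟩ : ℂˣ) : ℂ) = zeta (2 * k)) ∧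
      (∀ j : Fin μ.pos.length, ((φ ⟨d j, hdC j⟩ : ℂˣ) : ℂ) = zeta (μ.pos.get j)) ∧
      (∀ (i : Fin μ.neg.length) (hi : (i : ℕ) + 1 < μ.neg.length),
        μ.neg.get i = μ.neg.get ⟨(i : ℕ) + 1, hi⟩ →
        ((φ ⟨x i, hxC i⟩ : ℂˣ) : ℂ) = -1) ∧
      (∀ (j : Fin μ.pos.length) (hj : (j : ℕ) + 1 < μ.pos.length),
        μ.pos.get j = μ.pos.get ⟨(j : ℕ) + 1, hj⟩ →
        ((φ ⟨y j, hyC j⟩ : ℂˣ) : ℂ) = 1) ∧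
      (∀ j : Fin μ.pos.length,
        ((φ ⟨r j, hrC j⟩ : ℂˣ) : ℂ) = (-1 : ℂ) ^ (μ.pos.get j - 1)) := by
  exact S17.Ctx.main ⟨μ, c, d, x, y, r, hc, hd, hx, hy, hr, w, hw, hcC, hdC, hxC, hyC, hrC⟩
end
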